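/- arXiv:2202.11366 — 4 statements merged into one kernel-verified Lean document; each statement's English description precedes it below -/
import Mathlib

section
/- For any 2k points x₁,…,x_{2k} on the unit sphere S², the sum over all unordered pairs of the spherical (geodesic) distances satisfies ∑_{i<j} d(x_i,x_j) ≤ πk², with equality when the configuration is symmetric about the sphere's center. -/
/-!
The arcsine has a Taylor series `arcsin t = ∑ aₙ t^(2n+1)` with `aₙ ≥ 0` (integrate the binomial
series of `(1 - t²)^(-1/2)`), and by the Schur product theorem every Hadamard power of a Gram
matrix is positive semidefinite. Hence `∑ i, ∑ j, arcsin ⟪x i, x j⟫ ≥ 0`: first for the vectors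
`r • x i` with `r < 1`, where the series converges, then in the limit `r → 1`. As
`arccos = π / 2 - arcsin`, the sum of all `(2k)²` ordered distances is at most `(2k)² π / 2`.
For an antipodal configuration `d(-x, y) = π - d(x, y)`, so every row sum equals `kπ`.
-/

open Finset Real
open scoped RealInnerProductSpace

lemma Ring.choose_add_sub_one_nonneg {a : ℝ} (ha : 0 < a) (n : ℕ) :
    0 ≤ Ring.choose (a + n - 1) n := by
  rw [Ring.choose_eq_smul, Polynomial.descPochhammer_smeval_eq_ascPochhammer,
    Polynomial.ascPochhammer_smeval_eq_eval, show a + n - 1 - n + 1 = a by ring]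
  exact smul_nonneg (by positivity) (ascPochhammer_pos n a ha).le

lemma hasSum_choose_mul_pow_one_div_one_sub_rpow (a : ℝ) {u : ℝ} (hu : |u| < 1) :
    HasSum (fun n : ℕ => Ring.choose (a + n - 1) n * u ^ n) (1 / (1 - u) ^ a) := by
  have := (one_div_one_sub_rpow_hasFPowerSeriesOnBall_zero a).hasSum (y := u)
    (by simpa [enorm_eq_nnnorm, ← NNReal.coe_lt_coe] using hu)
  simpa [FormalMultilinearSeries.ofScalars_apply_eq, mul_comm] using this

noncomputable section

def invSqrtCoeff (n : ℕ) : ℝ := Ring.choose ((1 / 2 : ℝ) + n - 1) n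

lemma invSqrtCoeff_nonneg (n : ℕ) : 0 ≤ invSqrtCoeff n :=
  Ring.choose_add_sub_one_nonneg (by norm_num) n

lemma hasSum_invSqrtCoeff_mul_pow_two_mul {t : ℝ} (ht : |t| < 1) :
    HasSum (fun n => invSqrtCoeff n * t ^ (2 * n)) (1 / √(1 - t ^ 2)) := by
  simp_rw [pow_mul, Real.sqrt_eq_rpow]
  exact hasSum_choose_mul_pow_one_div_one_sub_rpow _
    (by rw [abs_pow]; nlinarith [abs_nonneg t])

lemma norm_invSqrtCoeff_mul_pow_le {r z : ℝ} (hz : |z| ≤ r) (n : ℕ) :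
    ‖invSqrtCoeff n * z ^ (2 * n)‖ ≤ invSqrtCoeff n * r ^ (2 * n) := by
  have := invSqrtCoeff_nonneg n
  rw [norm_mul, norm_pow, Real.norm_of_nonneg this, Real.norm_eq_abs]
  gcongr

def arcsinCoeff (n : ℕ) : ℝ := invSqrtCoeff n / (2 * n + 1)

lemma arcsinCoeff_nonneg (n : ℕ) : 0 ≤ arcsinCoeff n :=
  div_nonneg (invSqrtCoeff_nonneg n) (by positivity)

lemma hasDerivAt_arcsinCoeff_mul_pow (n : ℕ) (z : ℝ) :
    HasDerivAt (fun z => arcsinCoeff n * z ^ (2 * n + 1)) (invSqrtCoeff n * z ^ (2 * n)) z := by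
  refine ((hasDerivAt_pow (2 * n + 1) z).const_mul (arcsinCoeff n)).congr_deriv ?_
  rw [Nat.add_sub_cancel]
  unfold arcsinCoeff
  push_cast
  field_simp

lemma norm_arcsinCoeff_mul_pow_le {t : ℝ} (ht : |t| ≤ 1) (n : ℕ) :
    ‖arcsinCoeff n * t ^ (2 * n + 1)‖ ≤ invSqrtCoeff n * |t| ^ (2 * n) := by
  rw [norm_mul, norm_pow, Real.norm_of_nonneg (arcsinCoeff_nonneg n), pow_succ, Real.norm_eq_abs]
  unfold arcsinCoeff
  calc invSqrtCoeff n / (2 * n + 1) * (|t| ^ (2 * n) * |t|)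
      ≤ invSqrtCoeff n / 1 * (|t| ^ (2 * n) * 1) := by
        have := invSqrtCoeff_nonneg n
        gcongr
        linarith [(Nat.cast_nonneg n : (0 : ℝ) ≤ n)]
    _ = invSqrtCoeff n * |t| ^ (2 * n) := by ring

lemma hasDerivAt_tsum_arcsinCoeff_mul_pow {y : ℝ} (hy : |y| < 1) :
    HasDerivAt (fun z => ∑' n, arcsinCoeff n * z ^ (2 * n + 1)) (1 / √(1 - y ^ 2)) y := by
  obtain ⟨r, hyr, hr⟩ := exists_between hy
  have hr0 : 0 < r := (abs_nonneg y).trans_lt hyr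
  rw [← (hasSum_invSqrtCoeff_mul_pow_two_mul hy).tsum_eq]
  refine hasDerivAt_tsum_of_isPreconnected
    (hasSum_invSqrtCoeff_mul_pow_two_mul (abs_lt.2 ⟨by linarith, hr⟩)).summable
    Metric.isOpen_ball (convex_ball 0 r).isPreconnected
    (fun n z _ => hasDerivAt_arcsinCoeff_mul_pow n z)
    (fun n z hz => norm_invSqrtCoeff_mul_pow_le ?_ n) (Metric.mem_ball_self hr0) ?_
    (by simpa using hyr)
  · simpa [abs_of_pos hr0] using (mem_ball_zero_iff.1 hz).le
  · simp [summable_zero]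

theorem Real.hasSum_arcsin {t : ℝ} (ht : |t| < 1) :
    HasSum (fun n => arcsinCoeff n * t ^ (2 * n + 1)) (arcsin t) := by
  have hsum : Summable fun n => arcsinCoeff n * t ^ (2 * n + 1) := by
    refine .of_norm_bounded ?_ (norm_arcsinCoeff_mul_pow_le ht.le)
    simpa [abs_pow] using (hasSum_invSqrtCoeff_mul_pow_two_mul (t := |t|) (by rwa [abs_abs])).summable
  have hderiv : ∀ y ∈ Set.Ioo (-1 : ℝ) 1, HasDerivAt arcsin (1 / √(1 - y ^ 2)) y ∧
      HasDerivAt (fun z => ∑' n, arcsinCoeff n * z ^ (2 * n + 1)) (1 / √(1 - y ^ 2)) y :=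
    fun y hy => ⟨hasDerivAt_arcsin hy.1.ne' hy.2.ne,
      hasDerivAt_tsum_arcsinCoeff_mul_pow (abs_lt.2 hy)⟩
  refine hsum.hasSum_iff.2 <| isOpen_Ioo.eqOn_of_deriv_eq isPreconnected_Ioo
    (fun y hy => (hderiv y hy).2.differentiableAt.differentiableWithinAt)
    (fun y hy => (hderiv y hy).1.differentiableAt.differentiableWithinAt)
    (fun y hy => (hderiv y hy).2.deriv.trans (hderiv y hy).1.deriv.symm)
    (x := 0) (by norm_num) (by simp) (abs_lt.1 ht)

end

section

variable {ι E : Type*} [Fintype ι] [NormedAddCommGroup E] [InnerProductSpace ℝ E]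

lemma Matrix.PosSemidef.sum_sum_nonneg {A : Matrix ι ι ℝ} (hA : A.PosSemidef) :
    0 ≤ ∑ i, ∑ j, A i j := by
  simpa [dotProduct, Matrix.mulVec, Finset.mul_sum] using hA.dotProduct_mulVec_nonneg 1

lemma Matrix.posSemidef_of_inner_pow (v : ι → E) (p : ℕ) :
    (Matrix.of fun i j => ⟪v i, v j⟫ ^ p).PosSemidef := by
  induction p with
  | zero =>
    have h : (Matrix.of fun i j => ⟪v i, v j⟫ ^ 0) = Matrix.gram ℝ (fun _ : ι => (1 : ℝ)) := by
      ext; simp [Matrix.gram]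
    exact h ▸ Matrix.posSemidef_gram ℝ _
  | succ p ih =>
    have h : (Matrix.of fun i j => ⟪v i, v j⟫ ^ (p + 1)) =
        (Matrix.of fun i j => ⟪v i, v j⟫ ^ p).hadamard (Matrix.gram ℝ v) := by
      ext; simp [Matrix.gram, pow_succ]
    exact h ▸ ih.hadamard (Matrix.posSemidef_gram ℝ v)

lemma sum_sum_inner_pow_nonneg (v : ι → E) (p : ℕ) : 0 ≤ ∑ i, ∑ j, ⟪v i, v j⟫ ^ p :=
  (Matrix.posSemidef_of_inner_pow v p).sum_sum_nonneg

lemma sum_sum_arcsin_inner_nonneg_of_abs_lt {v : ι → E} (hv : ∀ i j, |⟪v i, v j⟫| < 1) :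
    0 ≤ ∑ i, ∑ j, arcsin ⟪v i, v j⟫ := by
  have hsum : HasSum (fun n => arcsinCoeff n * ∑ i, ∑ j, ⟪v i, v j⟫ ^ (2 * n + 1))
      (∑ i, ∑ j, arcsin ⟪v i, v j⟫) := by
    simp_rw [Finset.mul_sum]
    exact hasSum_sum fun i _ => hasSum_sum fun j _ => Real.hasSum_arcsin (hv i j)
  exact hsum.nonneg fun n => mul_nonneg (arcsinCoeff_nonneg n) (sum_sum_inner_pow_nonneg v _)

lemma sum_sum_arcsin_inner_nonneg {v : ι → E} (hv : ∀ i, ‖v i‖ ≤ 1) :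
    0 ≤ ∑ i, ∑ j, arcsin ⟪v i, v j⟫ := by
  set F : ℝ → ℝ := fun r => ∑ i, ∑ j, arcsin ⟪r • v i, r • v j⟫
  have hF : Continuous F := by fun_prop
  have hshrunk : ∀ r ∈ Set.Ioo (0 : ℝ) 1, 0 ≤ F r := fun r hr =>
    sum_sum_arcsin_inner_nonneg_of_abs_lt fun i j => calc
      |⟪r • v i, r • v j⟫| ≤ ‖r • v i‖ * ‖r • v j‖ := abs_real_inner_le_norm _ _
      _ = r * ‖v i‖ * (r * ‖v j‖) := by simp [norm_smul, abs_of_pos hr.1]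
      _ ≤ r * 1 * (r * 1) := by have := hr.1.le; gcongr <;> exact hv _
      _ < 1 := by nlinarith [hr.1, hr.2]
  have hlim : Filter.Tendsto F (nhdsWithin 1 (Set.Iio 1)) (nhds (F 1)) :=
    (hF.tendsto 1).mono_left nhdsWithin_le_nhds
  simpa [F] using ge_of_tendsto hlim <|
    Filter.eventually_of_mem (Ioo_mem_nhdsLT zero_lt_one) hshrunk

lemma sum_sum_arccos_inner_le {v : ι → E} (hv : ∀ i, ‖v i‖ ≤ 1) :
    ∑ i, ∑ j, arccos ⟪v i, v j⟫ ≤ Fintype.card ι ^ 2 * (π / 2) := by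
  have := sum_sum_arcsin_inner_nonneg hv
  simp only [arccos_eq_pi_div_two_sub_arcsin, Finset.sum_sub_distrib, Finset.sum_const,
    Finset.card_univ, nsmul_eq_mul] at this ⊢
  nlinarith

lemma sum_arccos_inner_of_antipodal {v : ι → E} (σ : Equiv.Perm ι) (hσ : ∀ i, v (σ i) = -v i)
    (w : E) : ∑ i, arccos ⟪w, v i⟫ = Fintype.card ι * π / 2 := by
  have h : ∑ i, arccos ⟪w, v i⟫ = ∑ i, (π - arccos ⟪w, v i⟫) := by
    rw [← Equiv.sum_comp σ]
    simp [hσ, inner_neg_right, arccos_neg]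
  rw [Finset.sum_sub_distrib, Finset.sum_const, Finset.card_univ, nsmul_eq_mul] at h
  linarith

lemma sum_sum_arccos_inner_of_antipodal {v : ι → E} (σ : Equiv.Perm ι)
    (hσ : ∀ i, v (σ i) = -v i) :
    ∑ i, ∑ j, arccos ⟪v i, v j⟫ = Fintype.card ι ^ 2 * (π / 2) := by
  simp only [sum_arccos_inner_of_antipodal σ hσ, Finset.sum_const, Finset.card_univ, nsmul_eq_mul]
  ring

end

lemma sum_sum_ite_lt_eq_half {ι : Type*} [Fintype ι] [LinearOrder ι] {f : ι → ι → ℝ}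
    (hsymm : ∀ i j, f i j = f j i) (hdiag : ∀ i, f i i = 0) :
    ∑ i, ∑ j, (if i < j then f i j else 0) = (∑ i, ∑ j, f i j) / 2 := by
  have hsplit : ∀ i j, f i j = (if i < j then f i j else 0) + (if j < i then f j i else 0) := by
    intro i j
    rcases lt_trichotomy i j with h | rfl | h
    · simp [h, h.not_gt]
    · simp [hdiag]
    · simp [h, h.not_gt, hsymm i j]
  have hswap : (∑ i, ∑ j, if j < i then f j i else 0) = ∑ i, ∑ j, if i < j then f i j else 0 :=
    Finset.sum_comm
  calc ∑ i, ∑ j, (if i < j then f i j else 0)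
      = ((∑ i, ∑ j, if i < j then f i j else 0) + ∑ i, ∑ j, if j < i then f j i else 0) / 2 := by
        rw [hswap]; ring
    _ = (∑ i, ∑ j, f i j) / 2 := by
        simp only [← Finset.sum_add_distrib, ← hsplit]

theorem sum_spherical_dist_even (k : ℕ) (x : Fin (2 * k) → EuclideanSpace ℝ (Fin 3))
    (hx : ∀ i, ‖x i‖ = 1) :
    (∑ i : Fin (2 * k), ∑ j : Fin (2 * k),
        if i < j then Real.arccos ⟪x i, x j⟫ else 0) ≤ π * k ^ 2 ∧
    ((∃ σ : Equiv.Perm (Fin (2 * k)), ∀ i, x (σ i) = -x i ∧ σ i ≠ i) →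
      (∑ i : Fin (2 * k), ∑ j : Fin (2 * k),
        if i < j then Real.arccos ⟪x i, x j⟫ else 0) = π * k ^ 2) := by
  have hdiag : ∀ i, arccos ⟪x i, x i⟫ = 0 := by simp [hx]
  rw [sum_sum_ite_lt_eq_half (fun i j => by rw [real_inner_comm]) hdiag]
  have hcard : (Fintype.card (Fin (2 * k)) : ℝ) = 2 * k := by simp
  refine ⟨?_, fun ⟨σ, hσ⟩ => ?_⟩
  · have := sum_sum_arccos_inner_le fun i => (hx i).le
    rw [hcard] at this
    linarith
  · rw [sum_sum_arccos_inner_of_antipodal σ fun i => (hσ i).1, hcard]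
    ring
end

section
/- For any N points x₁,…,x_N in ℝⁿ with pairwise distances all at most 1 (diameter at most 1), the sum ∑_{i<j} |x_i − x_j|² is at most N²·n/(2(n+1)). -/
open Finset

/-!
For weights `w i ≥ 0` summing to one, `∑ i, ∑ j, w i * w j * ‖x i - x j‖ ^ 2 = 2 * V w`
with `V w = ∑ i, w i * ‖x i‖ ^ 2 - ‖∑ i, w i • x i‖ ^ 2`, and the sum to be bounded is
`N ^ 2 * V w` at the uniform weights. Along a direction `ν` with `∑ i, ν i = 0` and
`∑ i, ν i • x i = 0` the function `V` is affine. If more than `n + 1` weights are positive, the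
corresponding points are affinely dependent, which gives such a direction inside the support;
moving along it, in the sense in which `V` does not decrease, until one more weight vanishes
shrinks the support. Hence `V w ≤ V w'` for some weights `w'` on at most `n + 1` points, and for
those the diameter bound and Cauchy–Schwarz give `2 * V w' ≤ 1 - ∑ i, w' i ^ 2 ≤ n / (n + 1)`.
-/

lemma two_nsmul_sum_sum_ite_lt {ι M : Type*} [Fintype ι] [LinearOrder ι] [AddCommMonoid M]
    (f : ι → ι → M) (hsymm : ∀ i j, f i j = f j i) (hdiag : ∀ i, f i i = 0) :
    2 • ∑ i, ∑ j, (if i < j then f i j else 0) = ∑ i, ∑ j, f i j := by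
  have hsplit : ∀ i j, f i j = (if i < j then f i j else 0) + (if j < i then f j i else 0) := by
    intro i j
    rcases lt_trichotomy i j with h | rfl | h
    · simp [h, h.not_gt]
    · simp [hdiag]
    · simp [h, h.not_gt, hsymm i j]
  calc 2 • ∑ i, ∑ j, (if i < j then f i j else 0)
      = ∑ i, ∑ j, (if i < j then f i j else 0) + ∑ i, ∑ j, (if j < i then f j i else 0) := by
        rw [two_nsmul, sum_comm (f := fun i j => if j < i then f j i else 0)]
    _ = ∑ i, ∑ j, f i j := by
        simp only [← sum_add_distrib, ← hsplit]

lemma exists_neg_of_sum_eq_zero {ι : Type*} [Fintype ι] {ν : ι → ℝ} (hν : ν ≠ 0)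
    (hsum : ∑ i, ν i = 0) : ∃ i, ν i < 0 := by
  by_contra! h
  exact hν (funext fun i => (sum_eq_zero_iff_of_nonneg fun j _ => h j).mp hsum i (mem_univ i))

lemma exists_add_mul_nonneg_card_support_lt {ι : Type*} [Fintype ι] {w ν : ι → ℝ}
    (hw : ∀ i, 0 ≤ w i) (hνw : ∀ i, w i = 0 → ν i = 0) (hneg : ∃ i, ν i < 0) :
    ∃ t : ℝ, 0 ≤ t ∧ (∀ i, 0 ≤ w i + t * ν i) ∧ #{i | w i + t * ν i ≠ 0} < #{i | w i ≠ 0} := by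
  obtain ⟨j, hj, hmin⟩ := exists_min_image {i | ν i < 0} (fun i => w i / -ν i)
    (by simpa [Finset.Nonempty] using hneg)
  rw [mem_filter_univ] at hj
  set t := w j / -ν j
  have htj : w j + t * ν j = 0 := by
    simp only [t]
    rw [div_neg, neg_mul, div_mul_cancel₀ _ hj.ne, add_neg_cancel]
  have ht : 0 ≤ t := div_nonneg (hw j) (by linarith)
  refine ⟨t, ht, fun i => ?_, card_lt_card ?_⟩
  · rcases lt_or_ge (ν i) 0 with hi | hi
    · have := hmin i (by simpa using hi)
      rw [le_div_iff₀ (by linarith)] at this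
      linarith
    · nlinarith [hw i]
  · rw [ssubset_iff_of_subset]
    · refine ⟨j, ?_, ?_⟩
      · simp only [mem_filter_univ]
        exact fun h => hj.ne (hνw j h)
      · simpa using htj
    · intro i
      simp only [mem_filter_univ]
      intro h hw0
      exact h (by simp [hw0, hνw i hw0])

lemma one_le_card_support_mul_sum_sq {ι : Type*} [Fintype ι] {w : ι → ℝ} (hw : ∑ i, w i = 1) :
    1 ≤ #{i | w i ≠ 0} * ∑ i, w i ^ 2 := by
  have hcs := sq_sum_le_card_mul_sum_sq (s := {i | w i ≠ 0}) (f := w)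
  rwa [sum_filter_ne_zero, hw, one_pow,
    sum_filter_of_ne fun i _ hi => by simpa using hi] at hcs

section WeightedVariance

variable {ι E : Type*} [Fintype ι] [NormedAddCommGroup E] [InnerProductSpace ℝ E]

/-- For weights summing to one this is `∑ i, w i * ‖x i - c‖ ^ 2`, where `c = ∑ i, w i • x i`. -/
noncomputable def weightedVariance (x : ι → E) (w : ι → ℝ) : ℝ :=
  ∑ i, w i * ‖x i‖ ^ 2 - ‖∑ i, w i • x i‖ ^ 2

lemma sum_sum_mul_dist_sq_eq (x : ι → E) {w : ι → ℝ} (hw : ∑ i, w i = 1) :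
    ∑ i, ∑ j, w i * w j * dist (x i) (x j) ^ 2 = 2 * weightedVariance x w := by
  have hinner : ∑ i, ∑ j, w i * w j * inner ℝ (x i) (x j) = ‖∑ i, w i • x i‖ ^ 2 := by
    rw [← real_inner_self_eq_norm_sq, sum_inner]
    simp_rw [inner_sum, real_inner_smul_left, real_inner_smul_right, mul_assoc]
  have hexpand : ∀ i j, w i * w j * dist (x i) (x j) ^ 2 =
      w i * ‖x i‖ ^ 2 * w j + w i * (w j * ‖x j‖ ^ 2) - 2 * (w i * w j * inner ℝ (x i) (x j)) := by
    intro i j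
    rw [dist_eq_norm, norm_sub_sq_real]
    ring
  simp only [hexpand, sum_sub_distrib, sum_add_distrib, ← mul_sum, ← sum_mul, hw, hinner, mul_one,
    one_mul]
  unfold weightedVariance
  ring

lemma weightedVariance_add_smul (x : ι → E) (w : ι → ℝ) {ν : ι → ℝ}
    (hν : ∑ i, ν i • x i = 0) (t : ℝ) :
    weightedVariance x (w + t • ν) = weightedVariance x w + t * ∑ i, ν i * ‖x i‖ ^ 2 := by
  have hmean : ∑ i, (w + t • ν) i • x i = ∑ i, w i • x i := by
    simp only [Pi.add_apply, Pi.smul_apply, smul_eq_mul, add_smul, mul_smul, sum_add_distrib,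
      ← smul_sum, hν, smul_zero, add_zero]
  unfold weightedVariance
  rw [hmean]
  simp only [Pi.add_apply, Pi.smul_apply, smul_eq_mul, add_mul, sum_add_distrib, mul_sum]
  ring_nf

lemma exists_affine_relation [FiniteDimensional ℝ E] (x : ι → E) {s : Finset ι}
    (hs : Module.finrank ℝ E + 1 < #s) :
    ∃ ν : ι → ℝ, ν ≠ 0 ∧ (∀ i ∉ s, ν i = 0) ∧ ∑ i, ν i = 0 ∧ ∑ i, ν i • x i = 0 := by
  classical
  have hdep : ¬LinearIndepOn ℝ (fun i => ((1 : ℝ), x i)) (s : Set ι) := by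
    intro h
    have := h.fintype_card_le_finrank
    simp only [coe_sort_coe, Fintype.card_coe, Module.finrank_prod, Module.finrank_self] at this
    omega
  simp only [linearIndepOn_finset_iff, not_forall] at hdep
  obtain ⟨g, hg, i, hi, hgi⟩ := hdep
  refine ⟨fun i => if i ∈ s then g i else 0, fun h => hgi (by simpa [hi] using congrFun h i),
    fun i hi => if_neg hi, ?_, ?_⟩
  · simpa [sum_ite_mem, Prod.fst_sum] using congrArg Prod.fst hg
  · simpa [ite_smul, sum_ite_mem, Prod.snd_sum] using congrArg Prod.snd hg

lemma two_mul_weightedVariance_le_one_sub_sum_sq {x : ι → E} (hx : ∀ i j, dist (x i) (x j) ≤ 1)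
    {w : ι → ℝ} (hw₀ : ∀ i, 0 ≤ w i) (hw₁ : ∑ i, w i = 1) :
    2 * weightedVariance x w ≤ 1 - ∑ i, w i ^ 2 := by
  classical
  rw [← sum_sum_mul_dist_sq_eq x hw₁]
  calc ∑ i, ∑ j, w i * w j * dist (x i) (x j) ^ 2
      ≤ ∑ i, ∑ j, (w i * w j - if i = j then w i * w j else 0) := by
        refine sum_le_sum fun i _ => sum_le_sum fun j _ => ?_
        rcases eq_or_ne i j with rfl | hij
        · simp
        · have hd : dist (x i) (x j) ^ 2 ≤ 1 := pow_le_one₀ dist_nonneg (hx i j)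
          rw [if_neg hij, sub_zero]
          exact mul_le_of_le_one_right (mul_nonneg (hw₀ i) (hw₀ j)) hd
    _ = 1 - ∑ i, w i ^ 2 := by
        simp [sum_sub_distrib, ← mul_sum, hw₁, sq]

lemma weightedVariance_le_of_card_support_le {x : ι → E} (hx : ∀ i j, dist (x i) (x j) ≤ 1)
    {w : ι → ℝ} (hw₀ : ∀ i, 0 ≤ w i) (hw₁ : ∑ i, w i = 1) {d : ℕ} (hd : #{i | w i ≠ 0} ≤ d + 1) :
    weightedVariance x w ≤ d / (2 * (d + 1)) := by
  have hvar := two_mul_weightedVariance_le_one_sub_sum_sq hx hw₀ hw₁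
  have hsq := one_le_card_support_mul_sum_sq hw₁
  have hd' : (#{i | w i ≠ 0} : ℝ) ≤ d + 1 := by exact_mod_cast hd
  have hsq₀ : 0 ≤ ∑ i, w i ^ 2 := sum_nonneg fun i _ => sq_nonneg (w i)
  rw [le_div_iff₀ (by positivity)]
  nlinarith

variable [FiniteDimensional ℝ E]

lemma exists_card_support_lt_weightedVariance_le (x : ι → E) {w : ι → ℝ}
    (hw₀ : ∀ i, 0 ≤ w i) (hw₁ : ∑ i, w i = 1) (hw : Module.finrank ℝ E + 1 < #{i | w i ≠ 0}) :
    ∃ w' : ι → ℝ, (∀ i, 0 ≤ w' i) ∧ ∑ i, w' i = 1 ∧ #{i | w' i ≠ 0} < #{i | w i ≠ 0} ∧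
      weightedVariance x w ≤ weightedVariance x w' := by
  obtain ⟨ν, hν, hνw, hν₁, hνx⟩ := exists_affine_relation x hw
  replace hνw : ∀ i, w i = 0 → ν i = 0 := fun i hi => hνw i (by simpa using hi)
  wlog hgrowth : 0 ≤ ∑ i, ν i * ‖x i‖ ^ 2 generalizing ν
  · refine this (-ν) (neg_ne_zero.mpr hν) (by simp [hν₁]) (by simp [hνx])
      (fun i hi => by simp [hνw i hi]) ?_
    simp only [Pi.neg_apply, neg_mul, sum_neg_distrib]
    linarith
  obtain ⟨t, ht, hwt₀, hwt⟩ := exists_add_mul_nonneg_card_support_lt hw₀ hνw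
    (exists_neg_of_sum_eq_zero hν hν₁)
  refine ⟨w + t • ν, hwt₀, ?_, hwt, ?_⟩
  · simp [sum_add_distrib, ← mul_sum, hw₁, hν₁]
  · rw [weightedVariance_add_smul x w hνx]
    exact le_add_of_nonneg_right (mul_nonneg ht hgrowth)

lemma exists_card_support_le_weightedVariance_le (x : ι → E) {w : ι → ℝ}
    (hw₀ : ∀ i, 0 ≤ w i) (hw₁ : ∑ i, w i = 1) :
    ∃ w' : ι → ℝ, (∀ i, 0 ≤ w' i) ∧ ∑ i, w' i = 1 ∧ #{i | w' i ≠ 0} ≤ Module.finrank ℝ E + 1 ∧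
      weightedVariance x w ≤ weightedVariance x w' := by
  induction hk : #{i | w i ≠ 0} using Nat.strong_induction_on generalizing w with
  | _ k ih =>
    by_cases hsmall : k ≤ Module.finrank ℝ E + 1
    · exact ⟨w, hw₀, hw₁, hk ▸ hsmall, le_rfl⟩
    obtain ⟨w', hw'₀, hw'₁, hw'k, hw'⟩ :=
      exists_card_support_lt_weightedVariance_le x hw₀ hw₁ (by omega)
    obtain ⟨w'', hw''₀, hw''₁, hw''k, hw''⟩ := ih _ (hk ▸ hw'k) hw'₀ hw'₁ rfl
    exact ⟨w'', hw''₀, hw''₁, hw''k, hw'.trans hw''⟩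

theorem weightedVariance_le_of_dist_le_one {x : ι → E} (hx : ∀ i j, dist (x i) (x j) ≤ 1)
    {w : ι → ℝ} (hw₀ : ∀ i, 0 ≤ w i) (hw₁ : ∑ i, w i = 1) :
    weightedVariance x w ≤ Module.finrank ℝ E / (2 * (Module.finrank ℝ E + 1)) := by
  obtain ⟨w', hw'₀, hw'₁, hw'd, hw'⟩ := exists_card_support_le_weightedVariance_le x hw₀ hw₁
  exact hw'.trans (weightedVariance_le_of_card_support_le hx hw'₀ hw'₁ hw'd)

end WeightedVariance

theorem witsenhausen (n N : ℕ) (x : Fin N → EuclideanSpace ℝ (Fin n))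
    (hdiam : ∀ i j, dist (x i) (x j) ≤ 1) :
    (∑ i : Fin N, ∑ j : Fin N, if i < j then dist (x i) (x j) ^ 2 else 0) ≤
      (N : ℝ) ^ 2 * n / (2 * (n + 1)) := by
  rcases N.eq_zero_or_pos with rfl | hN
  · simp
  set w : Fin N → ℝ := fun _ => (N : ℝ)⁻¹
  have hw₁ : ∑ i, w i = 1 := by simp [w, hN.ne']
  have hvar := weightedVariance_le_of_dist_le_one hdiam (fun _ => by positivity) hw₁
  rw [finrank_euclideanSpace_fin] at hvar
  have hsum : (2 : ℕ) • (∑ i : Fin N, ∑ j : Fin N, if i < j then dist (x i) (x j) ^ 2 else 0) =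
      (N : ℝ) ^ 2 * (2 * weightedVariance x w) := by
    rw [two_nsmul_sum_sum_ite_lt _ (fun i j => by rw [dist_comm]) (fun i => by simp),
      ← sum_sum_mul_dist_sq_eq x hw₁]
    simp only [w, mul_sum]
    refine sum_congr rfl fun i _ => sum_congr rfl fun j _ => ?_
    field_simp
  rw [two_nsmul] at hsum
  calc _ = (N : ℝ) ^ 2 * weightedVariance x w := by linarith
    _ ≤ (N : ℝ) ^ 2 * (n / (2 * (n + 1))) := by gcongr
    _ = (N : ℝ) ^ 2 * n / (2 * (n + 1)) := by ring
end

section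
/- In any stable packing of the plane by circles whose radii are bounded between positive constants, if Λ is the instability and d is the (lower) density, then d ≥ π / (n·tan(Λ/2) + tan((2π − nΛ)/2)), where n = ⌊2π/Λ⌋. -/
/-!
Assign every point of the plane to a disk of least power `‖x - cᵢ‖² - rᵢ²`. If disk `j` touches
disk `i` at the angle `θ`, a point beyond the tangent line to disk `i` at `θ` has smaller power
with respect to disk `j`, so the points assigned to disk `i` lie in the polygon circumscribed
about it whose sides touch it at its points of contact. Stability makes consecutive contact
angles at most `Λ < π` apart, so this polygon lies in the disk of radius `rᵢ / cos (Λ / 2)` and is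
a union of kites of total area `rᵢ² ∑ₖ tan (gₖ / 2)`, where the gaps `gₖ ≤ Λ` sum to `2π`; by
convexity of `tan` this is at most `rᵢ² (n tan (Λ / 2) + tan ((2π - nΛ) / 2))`. Summing over the
disks that meet a large ball bounds the area of the ball by this factor over `π` times the area
covered by the disks in a slightly larger ball.
-/

open MeasureTheory Real Set Metric Filter EuclideanGeometry
open scoped ENNReal Topology RealInnerProductSpace

section InnerProductSpace

variable {E : Type*} [NormedAddCommGroup E] [InnerProductSpace ℝ E]

lemma eq_add_smul_of_dist_le {c c' u : E} {r r' : ℝ} (hu : ‖u‖ = 1) (hr : 0 < r)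
    (hsep : r + r' ≤ dist c c') (hp : dist (c + r • u) c' ≤ r') :
    c' = c + (r + r') • u := by
  set w := c' - c
  have hD : r + r' ≤ ‖w‖ := by rwa [dist_comm, dist_eq_norm] at hsep
  replace hp : ‖w - r • u‖ ≤ r' := by
    rwa [dist_comm, dist_eq_norm, ← sub_sub] at hp
  have hr' : 0 ≤ r' := (norm_nonneg _).trans hp
  have h1 := norm_sub_sq_real w (r • u)
  have h2 := norm_sub_sq_real w ((r + r') • u)
  rw [real_inner_smul_right, norm_smul, hu, Real.norm_eq_abs, abs_of_pos hr] at h1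
  rw [real_inner_smul_right, norm_smul, hu, Real.norm_eq_abs, abs_of_nonneg (by linarith)] at h2
  have hsq := pow_le_pow_left₀ (norm_nonneg _) hp 2
  have hD2 := pow_le_pow_left₀ (by linarith) hD 2
  -- the contact point forces `⟪w, u⟫ ≥ r + r'`, hence `w = (r + r') • u`
  have hI : r + r' ≤ ⟪w, u⟫ := le_of_mul_le_mul_left (by nlinarith) hr
  have hzero : ‖w - (r + r') • u‖ ^ 2 ≤ 0 := by nlinarith [mul_nonneg hr' (sub_nonneg.mpr hI)]
  have : w = (r + r') • u := sub_eq_zero.mp (by simpa using hzero.antisymm (sq_nonneg _))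
  exact eq_add_of_sub_eq' this

lemma power_lt_of_lt_inner {x c c' u : E} {r r' : ℝ} (hu : ‖u‖ = 1)
    (hc' : c' = c + (r + r') • u) (hrr' : 0 < r + r') (hx : r < ⟪x - c, u⟫) :
    Sphere.power ⟨c', r'⟩ x < Sphere.power ⟨c, r⟩ x := by
  have h : x - c' = (x - c) - (r + r') • u := by rw [hc']; abel
  simp only [Sphere.power, dist_eq_norm]
  rw [h, norm_sub_sq_real, real_inner_smul_right, norm_smul, hu, Real.norm_eq_abs,
    abs_of_pos hrr']
  nlinarith

end InnerProductSpace

section Packing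

variable {E ι : Type*} {c : ι → E} {r : ι → ℝ} {r₀ R₀ : ℝ}

lemma finite_setOf_mem_closedBall [NormedAddCommGroup E] [NormedSpace ℝ E] [FiniteDimensional ℝ E]
    (hr₀ : 0 < r₀) (hr : ∀ i, r₀ ≤ r i)
    (hpack : Pairwise fun i j => Disjoint (ball (c i) (r i)) (ball (c j) (r j))) (x : E) (B : ℝ) :
    {i | c i ∈ closedBall x B}.Finite := by
  -- the balls of radius `r₀` about these centres are disjoint, have equal positive Haar
  -- measure and lie in a bounded set
  let : MeasurableSpace E := borel E
  have : BorelSpace E := ⟨rfl⟩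
  let μ : Measure E := Measure.addHaar
  refine (Measure.finite_const_le_meas_of_disjoint_iUnion μ (measure_ball_pos μ 0 hr₀)
    (As := fun i => ball (c i) r₀ ∩ ball x (B + r₀))
    (fun i => measurableSet_ball.inter measurableSet_ball)
    (fun i j hij => ((hpack hij).mono (inter_subset_left.trans (ball_subset_ball (hr i)))
      (inter_subset_left.trans (ball_subset_ball (hr j)))))
    ((measure_mono (iUnion_subset fun i => inter_subset_right)).trans_lt
      measure_ball_lt_top).ne).subset ?_
  intro i hi
  have hsub : ball (c i) r₀ ⊆ ball x (B + r₀) :=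
    ball_subset_ball' (by linarith [mem_closedBall.mp hi])
  simp only [mem_ofPred_eq, inter_eq_left.mpr hsub, Measure.addHaar_ball_center, le_rfl]

variable [NormedAddCommGroup E] [InnerProductSpace ℝ E]

lemma exists_forall_power_le [FiniteDimensional ℝ E] [Nonempty ι] (hr₀ : 0 < r₀)
    (hr : ∀ i, r i ∈ Icc r₀ R₀)
    (hpack : Pairwise fun i j => Disjoint (ball (c i) (r i)) (ball (c j) (r j))) (x : E) :
    ∃ i, ∀ j, Sphere.power ⟨c i, r i⟩ x ≤ Sphere.power ⟨c j, r j⟩ x := by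
  set f : ι → ℝ := fun i => Sphere.power ⟨c i, r i⟩ x
  obtain ⟨i₀⟩ := ‹Nonempty ι›
  have hsub : {j | f j ≤ f i₀} ⊆ {j | c j ∈ closedBall x √(f i₀ + R₀ ^ 2)} := by
    intro j hj
    have hrj := hr j
    have : dist (c j) x ^ 2 ≤ f i₀ + R₀ ^ 2 := by
      simp only [mem_ofPred_eq, f, Sphere.power] at hj ⊢
      rw [dist_comm]
      nlinarith [hrj.1, hrj.2]
    simpa using abs_le_sqrt this
  obtain ⟨i, hi, hmin⟩ := exists_min_image _ f
    ((finite_setOf_mem_closedBall hr₀ (fun i => (hr i).1) hpack x _).subset hsub)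
    ⟨i₀, le_refl (f i₀)⟩
  refine ⟨i, fun j => ?_⟩
  by_cases hj : f j ≤ f i₀
  · exact hmin j hj
  · exact (hi.trans (not_le.mp hj).le)

lemma inner_le_of_forall_power_le (hr₀ : 0 < r₀) (hr : ∀ i, r i ∈ Icc r₀ R₀)
    (hpack : Pairwise fun i j => Disjoint (ball (c i) (r i)) (ball (c j) (r j))) {x : E} {i j : ι}
    (hmin : ∀ k, Sphere.power ⟨c i, r i⟩ x ≤ Sphere.power ⟨c k, r k⟩ x) (hji : j ≠ i) {u : E}
    (hu : ‖u‖ = 1) (hcontact : c i + r i • u ∈ closedBall (c j) (r j)) :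
    ⟪x - c i, u⟫ ≤ r i := by
  have hri : 0 < r i := hr₀.trans_le (hr i).1
  have hrj : 0 < r j := hr₀.trans_le (hr j).1
  have htangent := eq_add_smul_of_dist_le hu hri
    ((disjoint_ball_ball_iff hri hrj).mp (hpack hji.symm)) hcontact
  by_contra! h
  exact (power_lt_of_lt_inner hu htangent (by linarith) h).not_ge (hmin j)

end Packing

section Convexity

lemma ConvexOn.mul_le_of_mem_Icc {f : ℝ → ℝ} {s : Set ℝ} {u v x : ℝ} (hf : ConvexOn ℝ s f)
    (hu : u ∈ s) (hv : v ∈ s) (hx : x ∈ Icc u v) :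
    (v - u) * f x ≤ (v - x) * f u + (x - u) * f v := by
  rcases hx.1.eq_or_lt with rfl | hux
  · linarith
  rcases hx.2.eq_or_lt with rfl | hxv
  · linarith
  exact hf.secant_mono_aux1 hu hv hux hxv

/-- The slopes `α` and `α + β` are those of the chords of `f` over `[0, ρ]` and `[ρ, Λ]`. -/
lemma ConvexOn.exists_le_linear_add_posPart {f : ℝ → ℝ} {Λ ρ : ℝ}
    (hf : ConvexOn ℝ (Icc 0 Λ) f) (hf0 : f 0 = 0) (hρ : 0 ≤ ρ) (hρΛ : ρ < Λ) :
    ∃ α β : ℝ, 0 ≤ β ∧ α * ρ = f ρ ∧ (α + β) * (Λ - ρ) = f Λ - f ρ ∧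
      ∀ x ∈ Icc 0 Λ, f x ≤ α * x + β * max (x - ρ) 0 := by
  have h0 : (0 : ℝ) ∈ Icc 0 Λ := ⟨le_rfl, by linarith⟩
  have hρm : ρ ∈ Icc 0 Λ := ⟨hρ, hρΛ.le⟩
  have hΛm : Λ ∈ Icc 0 Λ := ⟨by linarith, le_rfl⟩
  have hΛρ : 0 < Λ - ρ := sub_pos.mpr hρΛ
  set σ := (f Λ - f ρ) / (Λ - ρ)
  have hσ : σ * (Λ - ρ) = f Λ - f ρ := div_mul_cancel₀ _ hΛρ.ne'
  have hright : ∀ x ∈ Icc ρ Λ, f x ≤ f ρ + σ * (x - ρ) := by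
    intro x hx
    have hchord := hf.mul_le_of_mem_Icc hρm hΛm hx
    have key : (Λ - ρ) * (f ρ + σ * (x - ρ) - f x)
        = (Λ - x) * f ρ + (x - ρ) * f Λ - (Λ - ρ) * f x := by
      linear_combination (x - ρ) * hσ
    exact sub_nonneg.mp ((mul_nonneg_iff_of_pos_left hΛρ).mp (by linarith))
  rcases hρ.eq_or_lt with rfl | hρ
  · refine ⟨σ, 0, le_rfl, by rw [mul_zero, hf0], by rw [add_zero, hσ], fun x hx => ?_⟩
    simpa [hf0] using hright x hx
  refine ⟨f ρ / ρ, σ - f ρ / ρ, ?_, div_mul_cancel₀ _ hρ.ne', by rw [add_sub_cancel, hσ],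
    fun x hx => ?_⟩
  · have := hf.slope_mono_adjacent h0 hΛm hρ hρΛ
    simp only [hf0, sub_zero] at this
    exact sub_nonneg.mpr this
  rcases le_total x ρ with hxρ | hxρ
  · have := hf.mul_le_of_mem_Icc h0 hρm ⟨hx.1, hxρ⟩
    rw [max_eq_right (by linarith), mul_zero, add_zero, div_mul_eq_mul_div, le_div_iff₀ hρ]
    simp only [hf0, sub_zero, mul_zero, zero_add] at this
    linarith
  · rw [max_eq_left (by linarith)]
    have := hright x ⟨hxρ, hx.2⟩
    have hρ' : f ρ / ρ * ρ = f ρ := div_mul_cancel₀ _ hρ.ne'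
    nlinarith

lemma sum_max_sub_le {ι : Type*} (s : Finset ι) (g : ι → ℝ) {Λ ρ : ℝ} {n : ℕ} (hρ : 0 ≤ ρ)
    (hρΛ : ρ ≤ Λ) (hg : ∀ k ∈ s, g k ∈ Icc 0 Λ) (hsum : ∑ k ∈ s, g k = n * Λ + ρ) :
    ∑ k ∈ s, max (g k - ρ) 0 ≤ n * (Λ - ρ) := by
  classical
  set P := s.filter fun k => ρ < g k
  have hP : ∑ k ∈ s, max (g k - ρ) 0 = ∑ k ∈ P, (g k - ρ) := by
    rw [Finset.sum_filter]
    refine Finset.sum_congr rfl fun k _ => ?_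
    split_ifs with h
    · exact max_eq_left (by linarith)
    · exact max_eq_right (by linarith)
  have hbound1 : ∑ k ∈ P, (g k - ρ) ≤ P.card * (Λ - ρ) := by
    simpa using Finset.sum_le_card_nsmul P _ (Λ - ρ) fun k hk =>
      sub_le_sub_right (hg k (Finset.mem_filter.mp hk).1).2 ρ
  have hbound2 : ∑ k ∈ P, (g k - ρ) ≤ n * Λ + ρ - P.card * ρ := by
    rw [Finset.sum_sub_distrib, Finset.sum_const, nsmul_eq_mul, ← hsum]
    gcongr
    · exact fun k hk _ => (hg k hk).1
    · exact Finset.filter_subset _ s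
  rw [hP]
  rcases le_or_gt P.card n with h | h
  · exact hbound1.trans (mul_le_mul_of_nonneg_right (by exact_mod_cast h) (sub_nonneg.mpr hρΛ))
  · have : (n : ℝ) + 1 ≤ P.card := by exact_mod_cast h
    nlinarith

/-- A majorization inequality: `(Λ, …, Λ, ρ, 0, …, 0)`, with `n` entries `Λ`, majorizes `g`. -/
theorem ConvexOn.sum_comp_le_of_sum_eq {f : ℝ → ℝ} {Λ ρ : ℝ} {n : ℕ}
    (hf : ConvexOn ℝ (Icc 0 Λ) f) (hf0 : f 0 = 0) (hρ : 0 ≤ ρ) (hρΛ : ρ < Λ)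
    {ι : Type*} (s : Finset ι) (g : ι → ℝ) (hg : ∀ k ∈ s, g k ∈ Icc 0 Λ)
    (hsum : ∑ k ∈ s, g k = n * Λ + ρ) :
    ∑ k ∈ s, f (g k) ≤ n * f Λ + f ρ := by
  obtain ⟨α, β, hβ, hαρ, hαβ, hle⟩ := hf.exists_le_linear_add_posPart hf0 hρ hρΛ
  calc ∑ k ∈ s, f (g k) ≤ ∑ k ∈ s, (α * g k + β * max (g k - ρ) 0) :=
        Finset.sum_le_sum fun k hk => hle _ (hg k hk)
    _ = α * (n * Λ + ρ) + β * ∑ k ∈ s, max (g k - ρ) 0 := by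
        rw [Finset.sum_add_distrib, ← Finset.mul_sum, ← Finset.mul_sum, hsum]
    _ ≤ α * (n * Λ + ρ) + β * (n * (Λ - ρ)) := by
        gcongr; exact sum_max_sub_le s g hρ hρΛ.le hg hsum
    _ = n * f Λ + f ρ := by linear_combination (n + 1 : ℝ) * hαρ + n * hαβ

lemma convexOn_tan : ConvexOn ℝ (Ico 0 (π / 2)) tan := by
  have hcos : ∀ x ∈ Ico 0 (π / 2), 0 < cos x :=
    fun x hx => cos_pos_of_mem_Ioo ⟨by linarith [hx.1, pi_pos], hx.2⟩
  refine MonotoneOn.convexOn_of_deriv (convex_Ico 0 (π / 2))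
    (continuousOn_tan.mono fun x hx => (hcos x hx).ne') (fun x hx => ?_) ?_
  · rw [interior_Ico] at hx
    exact (differentiableAt_tan.mpr (hcos x (Ioo_subset_Ico_self hx)).ne').differentiableWithinAt
  · rw [interior_Ico]
    intro a ha b hb hab
    have hb' := hcos b (Ioo_subset_Ico_self hb)
    simp only [deriv_tan]
    gcongr
    exact cos_le_cos_of_nonneg_of_le_pi ha.1.le (by linarith [hb.2, pi_pos]) hab

lemma convexOn_tan_half {Λ : ℝ} (hΛ : Λ < π) : ConvexOn ℝ (Icc 0 Λ) fun x => tan (x / 2) := by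
  refine ((convexOn_tan.comp_linearMap ((1 / 2 : ℝ) • LinearMap.id)).subset
    (fun x hx => ⟨?_, ?_⟩) (convex_Icc 0 Λ)).congr fun x _ => ?_
  all_goals simp only [LinearMap.smul_apply, LinearMap.id_apply, smul_eq_mul, Function.comp_apply]
  · linarith [hx.1]
  · linarith [hx.2]
  · ring_nf

end Convexity

section Chain

variable {S : Set ℝ} {Λ : ℝ}

lemma exists_seq_mem_of_forall_Ioc (hS : IsClosed S)
    (hgap : ∀ θ, (S ∩ Ioc θ (θ + Λ)).Nonempty) :
    ∃ t : ℕ → ℝ, (∀ k, t k ∈ S) ∧ (∀ k, t k ≤ t (k + 1) ∧ t (k + 1) ≤ t k + Λ) ∧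
      ∀ k : ℕ, t 0 + k * Λ ≤ t (2 * k) := by
  set g : ℝ → ℝ := fun θ => sSup (S ∩ Icc θ (θ + Λ))
  have hbdd : ∀ θ, BddAbove (S ∩ Icc θ (θ + Λ)) := fun θ => bddAbove_Icc.mono inter_subset_right
  have hg : ∀ θ, g θ ∈ S ∩ Icc θ (θ + Λ) := fun θ =>
    (hS.inter isClosed_Icc).csSup_mem
      ((hgap θ).mono (inter_subset_inter_right _ Ioc_subset_Icc_self)) (hbdd θ)
  have hle : ∀ θ s, s ∈ S ∩ Icc θ (θ + Λ) → s ≤ g θ := fun θ s hs => le_csSup (hbdd θ) hs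
  have hprogress : ∀ θ, θ + Λ ≤ g (g θ) := by
    intro θ
    -- `S` has no point in `(g θ, θ + Λ]`, so its next point after `g θ` lies beyond `θ + Λ`
    obtain ⟨s, hsS, hs₁, hs₂⟩ := hgap (g θ)
    have hθs : θ + Λ < s := by
      by_contra! h
      exact (hle θ s ⟨hsS, (hg θ).2.1.trans hs₁.le, h⟩).not_gt hs₁
    exact hθs.le.trans (hle _ s ⟨hsS, hs₁.le, hs₂⟩)
  have hsucc : ∀ k, g^[k + 1 + 1] 0 = g (g^[k + 1] 0) := fun k => Function.iterate_succ_apply' ..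
  refine ⟨fun k => g^[k + 1] 0, fun k => ?_, fun k => ?_, fun k => ?_⟩ <;> dsimp only
  · rw [Function.iterate_succ_apply']
    exact (hg _).1
  · rw [hsucc]
    exact (hg _).2
  · induction k with
    | zero => simp
    | succ k ih =>
      rw [show 2 * (k + 1) + 1 = 2 * k + 1 + 1 + 1 by ring, hsucc, hsucc]
      push_cast
      linarith [hprogress (g^[2 * k + 1] 0)]

lemma exists_chain_of_forall_Ioc (hS : IsClosed S) (hgap : ∀ θ, (S ∩ Ioc θ (θ + Λ)).Nonempty)
    {p : ℝ} (hp : 0 ≤ p) (hper : ∀ θ ∈ S, θ + p ∈ S) :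
    ∃ (m : ℕ) (a : ℕ → ℝ), (∀ k ≤ m + 1, a k ∈ S) ∧
      (∀ k ≤ m, a k ≤ a (k + 1) ∧ a (k + 1) ≤ a k + Λ) ∧ a (m + 1) = a 0 + p := by
  classical
  have hΛ : 0 < Λ := by
    obtain ⟨s, -, hs₁, hs₂⟩ := hgap 0
    linarith
  obtain ⟨t, htS, hstep, hgrowth⟩ := exists_seq_mem_of_forall_Ioc hS hgap
  have hex : ∃ k, t 0 + p - Λ ≤ t k := by
    obtain ⟨k, hk⟩ := exists_nat_ge (p / Λ)
    refine ⟨2 * k, le_trans ?_ (hgrowth k)⟩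
    have := (div_le_iff₀ hΛ).mp hk
    linarith
  set m := Nat.find hex
  have hm : t 0 + p - Λ ≤ t m := Nat.find_spec hex
  have hm_le : t m ≤ t 0 + p := by
    by_cases h0 : m = 0
    · rw [h0]; linarith
    · have hlt : t (m - 1) < t 0 + p - Λ := not_le.mp (Nat.find_min hex (by omega))
      have := (hstep (m - 1)).2
      rw [Nat.sub_add_cancel (Nat.one_le_iff_ne_zero.mpr h0)] at this
      linarith
  refine ⟨m, fun k => if k ≤ m then t k else t 0 + p, fun k hk => ?_, fun k hk => ?_, ?_⟩
  · dsimp only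
    split_ifs
    · exact htS k
    · exact hper _ (htS 0)
  · rcases hk.lt_or_eq with hk | rfl
    · simp only [hk.le, if_true, Nat.succ_le_of_lt hk]
      exact hstep k
    · simp only [le_rfl, if_true, Nat.not_succ_le_self, if_false]
      constructor <;> linarith
  · simp

lemma nonempty_inter_Ioc_of_forall_exists_mem_Icc (hS : IsClosed S)
    (hΛ : 0 < Λ) (hstab : ∀ α, ∀ ε > 0, ∃ θ ∈ Icc α (α + Λ + ε), θ ∈ S) (θ : ℝ) :
    (S ∩ Ioc θ (θ + Λ)).Nonempty := by
  by_contra hempty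
  have hcl : θ + Λ ∈ closure S := by
    refine Metric.mem_closure_iff.mpr fun ε hε => ?_
    obtain ⟨s, ⟨hs₁, hs₂⟩, hsS⟩ := hstab (θ + ε / 3) (ε / 3) (by positivity)
    have : θ + Λ < s := by
      by_contra! hle
      exact hempty ⟨s, hsS, by linarith, hle⟩
    exact ⟨s, hsS, by rw [Real.dist_eq, abs_lt]; constructor <;> linarith⟩
  exact hempty ⟨θ + Λ, hS.closure_eq ▸ hcl, by linarith, le_rfl⟩

end Chain

abbrev E2 := EuclideanSpace ℝ (Fin 2)

noncomputable def unitVec (θ : ℝ) : E2 := !₂[cos θ, sin θ]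

@[simp] lemma unitVec_zero (θ : ℝ) : unitVec θ 0 = cos θ := rfl
@[simp] lemma unitVec_one (θ : ℝ) : unitVec θ 1 = sin θ := rfl

lemma continuous_unitVec : Continuous unitVec :=
  (PiLp.continuous_toLp 2 _).comp (continuous_pi fun i => by fin_cases i <;> simp <;> fun_prop)

lemma inner_unitVec (α β : ℝ) : ⟪unitVec α, unitVec β⟫ = cos (α - β) := by
  simp [PiLp.inner_apply, Fin.sum_univ_two, cos_sub]; ring

lemma norm_unitVec (θ : ℝ) : ‖unitVec θ‖ = 1 := by
  simp [EuclideanSpace.norm_eq, Fin.sum_univ_two]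

lemma unitVec_sub_int_mul_two_pi (θ : ℝ) (k : ℤ) : unitVec (θ - k * (2 * π)) = unitVec θ := by
  simp [unitVec, cos_sub_int_mul_two_pi, sin_sub_int_mul_two_pi]

lemma unitVec_add (φ ψ : ℝ) :
    unitVec (φ + ψ) = cos ψ • unitVec φ + sin ψ • unitVec (φ + π / 2) := by
  ext i; fin_cases i <;> simp [cos_add, sin_add] <;> ring

lemma exists_eq_norm_smul_unitVec (y : E2) : ∃ β, y = ‖y‖ • unitVec β := by
  set z := Complex.orthonormalBasisOneI.repr.symm y
  have hz : ‖z‖ = ‖y‖ := LinearIsometryEquiv.norm_map _ _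
  refine ⟨Complex.arg z, ?_⟩
  ext i; fin_cases i <;> simp [← hz, z]

def triangle {V : Type*} [AddCommGroup V] [Module ℝ V] (v w : V) : Set V :=
  {x | ∃ s t : ℝ, 0 ≤ s ∧ 0 ≤ t ∧ s + t ≤ 1 ∧ s • v + t • w = x}

lemma volume_stdTriangle :
    volume {p : ℝ × ℝ | 0 ≤ p.1 ∧ 0 ≤ p.2 ∧ p.1 + p.2 ≤ 1} ≤ ENNReal.ofReal (1 / 2) := by
  have hslice : ∀ s : ℝ, volume (Prod.mk s ⁻¹' {p : ℝ × ℝ | 0 ≤ p.1 ∧ 0 ≤ p.2 ∧ p.1 + p.2 ≤ 1})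
      ≤ (Icc 0 1).indicator (fun s => ENNReal.ofReal (1 - s)) s := by
    intro s
    by_cases hs : s ∈ Icc (0 : ℝ) 1
    · rw [indicator_of_mem hs, ← sub_zero (1 - s), ← Real.volume_Icc]
      exact measure_mono fun t ⟨_, ht, hst⟩ => ⟨ht, by linarith⟩
    · refine le_of_eq ?_
      rw [indicator_of_notMem hs, measure_eq_zero_iff_ae_notMem]
      refine Filter.Eventually.of_forall fun t ⟨h0, ht, hst⟩ => hs ⟨h0, by linarith⟩
  rw [Measure.volume_eq_prod, Measure.prod_apply (by measurability)]
  calc _ ≤ ∫⁻ s, (Icc 0 1).indicator (fun s => ENNReal.ofReal (1 - s)) s := lintegral_mono hslice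
    _ = ENNReal.ofReal (∫ s in (0 : ℝ)..1, (1 - s)) := by
      rw [lintegral_indicator measurableSet_Icc, intervalIntegral.integral_of_le zero_le_one,
        ← integral_Icc_eq_integral_Ioc, ofReal_integral_eq_lintegral_ofReal]
      · exact (continuous_const.sub continuous_id).integrableOn_Icc
      · filter_upwards [ae_restrict_mem measurableSet_Icc] with s hs
        exact sub_nonneg.mpr hs.2
    _ = ENNReal.ofReal (1 / 2) := by
      rw [intervalIntegral.integral_sub intervalIntegrable_const
        intervalIntegral.intervalIntegrable_id]
      norm_num [integral_id]

lemma volume_triangle_le (v w : E2) :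
    volume (triangle v w) ≤ ENNReal.ofReal (|v 0 * w 1 - v 1 * w 0| / 2) := by
  set T := {p : ℝ × ℝ | 0 ≤ p.1 ∧ 0 ≤ p.2 ∧ p.1 + p.2 ≤ 1}
  set e := (MeasurableEquiv.toLp 2 (Fin 2 → ℝ)).symm.trans MeasurableEquiv.finTwoArrow
  have he : MeasurePreserving e :=
    (volume_preserving_finTwoArrow ℝ).comp
      (EuclideanSpace.volume_preserving_symm_measurableEquiv_toLp _)
  set A := Matrix.toLpLin 2 2 !![v 0, w 0; v 1, w 1]
  have himage : triangle v w = A '' (e ⁻¹' T) := by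
    ext x
    constructor
    · rintro ⟨s, t, hs, ht, hst, rfl⟩
      refine ⟨!₂[s, t], ⟨hs, ht, hst⟩, ?_⟩
      ext i; fin_cases i <;> simp [A]
    · rintro ⟨y, ⟨hs, ht, hst⟩, rfl⟩
      refine ⟨y 0, y 1, hs, ht, hst, ?_⟩
      ext i; fin_cases i <;> simp [A, Matrix.mulVec, dotProduct, Fin.sum_univ_two] <;> ring
  rw [himage, Measure.addHaar_image_linearMap, LinearMap.det_toLpLin, Matrix.det_fin_two_of,
    he.measure_preimage_equiv]
  calc ENNReal.ofReal |v 0 * w 1 - w 0 * v 1| * volume T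
      ≤ ENNReal.ofReal |v 0 * w 1 - w 0 * v 1| * ENNReal.ofReal (1 / 2) := by
        gcongr; exact volume_stdTriangle
    _ = _ := by rw [← ENNReal.ofReal_mul (abs_nonneg _)]; ring_nf

/-- With `(κ, σ) = (cos γ, sin γ)`, `e = unitVec μ` and `f = ± unitVec (μ + π / 2)`, this triangle
is the half of `kite r μ γ` on the side of `f`. -/
lemma smul_add_smul_mem_triangle {V : Type*} [AddCommGroup V] [Module ℝ V] (e f : V)
    {κ σ r p q : ℝ} (hκ : 0 < κ) (hσ : 0 ≤ σ) (hκσ : κ ^ 2 + σ ^ 2 = 1) (hr : 0 < r)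
    (hp : 0 ≤ p) (hq : 0 ≤ q) (hqp : q * κ ≤ p * σ) (hpq : p * κ + q * σ ≤ r) :
    p • e + q • f ∈ triangle ((r / κ) • e) (r • (κ • e + σ • f)) := by
  rcases hσ.eq_or_lt with rfl | hσ
  · have hκ1 : κ = 1 := by nlinarith
    have hq0 : q = 0 := by subst hκ1; linarith
    subst hκ1 hq0
    refine ⟨p / r, 0, by positivity, le_rfl, by rw [add_zero, div_le_one hr]; linarith, ?_⟩
    rw [smul_smul, div_mul_div_cancel₀ hr.ne', div_one]; simp
  · refine ⟨(p * σ - q * κ) * κ / (r * σ), q / (r * σ), by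
      apply div_nonneg <;> nlinarith, by positivity, ?_, ?_⟩
    · rw [← add_div, div_le_one (by positivity)]; nlinarith
    · simp only [smul_add, smul_smul]
      match_scalars
      · field_simp
        ring
      · field_simp

/-- The kite circumscribed about the circle of radius `r` centred at the origin, with
sides tangent to it at the angles `μ - γ` and `μ + γ`. -/
noncomputable def kite (r μ γ : ℝ) : Set E2 :=
  triangle ((r / cos γ) • unitVec μ) (r • unitVec (μ + γ)) ∪
    triangle ((r / cos γ) • unitVec μ) (r • unitVec (μ - γ))

lemma volume_kite_le {r μ γ : ℝ} (hγ : 0 ≤ γ) (hγπ : γ < π / 2) :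
    volume (kite r μ γ) ≤ ENNReal.ofReal (r ^ 2 * tan γ) := by
  have hcos : 0 < cos γ := cos_pos_of_mem_Ioo ⟨by linarith, hγπ⟩
  have hsin : 0 ≤ sin γ := sin_nonneg_of_nonneg_of_le_pi hγ (by linarith)
  have htan : 0 ≤ r ^ 2 * tan γ / 2 := div_nonneg
    (mul_nonneg (sq_nonneg r) (tan_nonneg_of_nonneg_of_le_pi_div_two hγ hγπ.le)) two_pos.le
  have harea : ∀ δ, |sin δ| = sin γ →
      volume (triangle ((r / cos γ) • unitVec μ) (r • unitVec (μ + δ))) ≤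
        ENNReal.ofReal (r ^ 2 * tan γ / 2) := by
    intro δ hδ
    refine (volume_triangle_le _ _).trans_eq ?_
    have hcross : (r / cos γ * cos μ) * (r * sin (μ + δ)) - (r / cos γ * sin μ) * (r * cos (μ + δ))
        = r ^ 2 / cos γ * sin δ := by
      rw [sin_add, cos_add]
      field_simp
      linear_combination (r ^ 2 * sin δ) * sin_sq_add_cos_sq μ
    simp only [PiLp.smul_apply, smul_eq_mul, unitVec_zero, unitVec_one]
    rw [hcross, abs_mul, hδ, abs_of_nonneg (by positivity), tan_eq_sin_div_cos]
    ring_nf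
  calc volume (kite r μ γ)
      ≤ ENNReal.ofReal (r ^ 2 * tan γ / 2) + ENNReal.ofReal (r ^ 2 * tan γ / 2) :=
        (measure_union_le _ _).trans (add_le_add (harea γ (abs_of_nonneg hsin)) (by
          simpa [sub_eq_add_neg] using harea (-γ) (by rw [sin_neg, abs_neg, abs_of_nonneg hsin])))
    _ = _ := by rw [← ENNReal.ofReal_add htan htan]; ring_nf

lemma mem_kite {r μ γ ρ δ : ℝ} {y : E2} (hr : 0 < r) (hγπ : γ < π / 2) (hρ : 0 ≤ ρ)
    (hδ : |δ| ≤ γ) (hy : y = ρ • unitVec (μ + δ)) (hlo : ⟪y, unitVec (μ - γ)⟫ ≤ r)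
    (hhi : ⟪y, unitVec (μ + γ)⟫ ≤ r) : y ∈ kite r μ γ := by
  have := pi_pos
  have hcos : 0 < cos γ := cos_pos_of_mem_Ioo ⟨by linarith [abs_nonneg δ], hγπ⟩
  have hsin : 0 ≤ sin γ := sin_nonneg_of_nonneg_of_le_pi (by linarith [abs_nonneg δ]) (by linarith)
  have hcosδ : 0 ≤ ρ * cos δ :=
    mul_nonneg hρ (cos_nonneg_of_mem_Icc ⟨by linarith [neg_abs_le δ], by linarith [le_abs_self δ]⟩)
  rw [hy, real_inner_smul_left, inner_unitVec, show μ + δ - (μ - γ) = δ + γ by ring, cos_add]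
    at hlo
  rw [hy, real_inner_smul_left, inner_unitVec, show μ + δ - (μ + γ) = δ - γ by ring, cos_sub]
    at hhi
  have hpyth := sin_sq_add_cos_sq γ
  rw [hy, unitVec_add]
  rcases le_total 0 δ with hδ0 | hδ0
  · have h := sin_nonneg_of_nonneg_of_le_pi (x := γ - δ) (by linarith [le_abs_self δ]) (by linarith)
    rw [sin_sub] at h
    left
    rw [unitVec_add μ γ]
    convert smul_add_smul_mem_triangle (unitVec μ) (unitVec (μ + π / 2)) hcos hsin (by linarith)
      hr hcosδ (mul_nonneg hρ (sin_nonneg_of_nonneg_of_le_pi hδ0 (by linarith [le_abs_self δ])))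
      (by nlinarith) (by nlinarith) using 1
    simp only [smul_add, smul_smul]
  · have h := sin_nonneg_of_nonneg_of_le_pi (x := γ + δ) (by linarith [neg_abs_le δ]) (by linarith)
    rw [sin_add] at h
    right
    rw [sub_eq_add_neg, unitVec_add μ (-γ), cos_neg, sin_neg]
    convert smul_add_smul_mem_triangle (unitVec μ) (-unitVec (μ + π / 2)) hcos hsin (by linarith)
      hr hcosδ (q := -(ρ * sin δ)) (neg_nonneg.mpr (mul_nonpos_of_nonneg_of_nonpos hρ
        (sin_nonpos_of_nonpos_of_neg_pi_le hδ0 (by linarith [neg_abs_le δ]))))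
      (by nlinarith) (by nlinarith) using 1 <;>
    simp only [smul_add, smul_smul, smul_neg, neg_smul, neg_neg]

def tangentPolygon (r : ℝ) (S : Set ℝ) : Set E2 := {y | ∀ θ ∈ S, ⟪y, unitVec θ⟫ ≤ r}

section TangentPolygon

variable {S : Set ℝ} {Λ r : ℝ}

lemma preimage_sub_tangentPolygon_subset_closedBall (hΛ : 0 < Λ) (hΛπ : Λ < π)
    (hgap : ∀ θ, (S ∩ Ioc θ (θ + Λ)).Nonempty) (c : E2) :
    (· - c) ⁻¹' tangentPolygon r S ⊆ closedBall c (r / cos (Λ / 2)) := by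
  intro x hx
  have hcos : 0 < cos (Λ / 2) := cos_pos_of_mem_Ioo ⟨by linarith, by linarith⟩
  obtain ⟨β, hβ⟩ := exists_eq_norm_smul_unitVec (x - c)
  obtain ⟨θ, hθS, hθ₁, hθ₂⟩ := hgap (β - Λ / 2)
  have hxθ : ⟪x - c, unitVec θ⟫ ≤ r := hx θ hθS
  rw [hβ, real_inner_smul_left, inner_unitVec] at hxθ
  have hangle : cos (Λ / 2) ≤ cos (β - θ) := by
    rw [← cos_abs (β - θ)]
    exact cos_le_cos_of_nonneg_of_le_pi (abs_nonneg _) (by linarith)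
      (abs_le.mpr ⟨by linarith, by linarith⟩)
  rw [mem_closedBall, dist_eq_norm, le_div_iff₀ hcos]
  nlinarith [norm_nonneg (x - c)]

lemma tangentPolygon_subset_biUnion_kite (hr : 0 < r) (hΛπ : Λ < π) {m : ℕ} {a : ℕ → ℝ}
    (haS : ∀ k ≤ m + 1, a k ∈ S) (hstep : ∀ k ≤ m, a k ≤ a (k + 1) ∧ a (k + 1) ≤ a k + Λ)
    (hperiod : a (m + 1) = a 0 + 2 * π) :
    tangentPolygon r S ⊆
      ⋃ k ∈ Finset.range (m + 1), kite r ((a k + a (k + 1)) / 2) ((a (k + 1) - a k) / 2) := by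
  intro y hy
  obtain ⟨β₀, hβ₀⟩ := exists_eq_norm_smul_unitVec y
  set β := toIcoMod two_pi_pos (a 0) β₀
  have hβ : β ∈ Ico (a 0) (a 0 + 2 * π) := toIcoMod_mem_Ico _ _ _
  have hyβ : y = ‖y‖ • unitVec β := by
    rw [hβ₀, norm_smul, norm_unitVec, mul_one, norm_norm, eq_sub_of_add_eq'
      (sub_add_cancel β₀ β), self_sub_toIcoMod, zsmul_eq_mul, unitVec_sub_int_mul_two_pi]
  obtain ⟨k, hkm, hk₁, hk₂⟩ : ∃ k ≤ m, a k ≤ β ∧ β ≤ a (k + 1) := by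
    have hex : ∃ k, β < a (k + 1) := ⟨m, hperiod ▸ hβ.2⟩
    refine ⟨Nat.find hex, Nat.find_min' hex (hperiod ▸ hβ.2), ?_, (Nat.find_spec hex).le⟩
    rcases Nat.eq_zero_or_pos (Nat.find hex) with h | h
    · exact h ▸ hβ.1
    · have := Nat.find_min hex (Nat.sub_lt h one_pos)
      rwa [Nat.sub_add_cancel (Nat.one_le_iff_ne_zero.mpr h.ne'), not_lt] at this
  refine mem_biUnion (Finset.mem_range.mpr (Nat.lt_succ_of_le hkm)) (mem_kite hr ?_ (norm_nonneg y)
    (δ := β - (a k + a (k + 1)) / 2) (abs_le.mpr ⟨by linarith, by linarith⟩) (by simpa using hyβ)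
    ?_ ?_)
  · linarith [(hstep k hkm).2]
  · rw [show (a k + a (k + 1)) / 2 - (a (k + 1) - a k) / 2 = a k by ring]
    exact hy _ (haS k (by omega))
  · rw [show (a k + a (k + 1)) / 2 + (a (k + 1) - a k) / 2 = a (k + 1) by ring]
    exact hy _ (haS (k + 1) (by omega))

lemma volume_tangentPolygon_le (hS : IsClosed S) (hΛπ : Λ < π)
    (hgap : ∀ θ, (S ∩ Ioc θ (θ + Λ)).Nonempty) (hper : ∀ θ ∈ S, θ + 2 * π ∈ S) (hr : 0 < r)
    {n : ℕ} (hn : n * Λ ≤ 2 * π) (hn' : 2 * π < (n + 1) * Λ) :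
    volume (tangentPolygon r S) ≤
      ENNReal.ofReal (r ^ 2 * (n * tan (Λ / 2) + tan ((2 * π - n * Λ) / 2))) := by
  obtain ⟨m, a, haS, hstep, hperiod⟩ := exists_chain_of_forall_Ioc hS hgap two_pi_pos.le hper
  have hgap_mem : ∀ k ∈ Finset.range (m + 1), a (k + 1) - a k ∈ Icc 0 Λ := fun k hk => by
    have := hstep k (Nat.lt_succ_iff.mp (Finset.mem_range.mp hk))
    exact ⟨by linarith, by linarith⟩
  have htan : ∀ k ∈ Finset.range (m + 1), 0 ≤ r ^ 2 * tan ((a (k + 1) - a k) / 2) := fun k hk =>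
    mul_nonneg (sq_nonneg r) (tan_nonneg_of_nonneg_of_le_pi_div_two
      (by linarith [(hgap_mem k hk).1]) (by linarith [(hgap_mem k hk).2]))
  have hsum : ∑ k ∈ Finset.range (m + 1), (a (k + 1) - a k) = n * Λ + (2 * π - n * Λ) := by
    rw [Finset.sum_range_sub, hperiod]; ring
  have hconv := (convexOn_tan_half hΛπ).sum_comp_le_of_sum_eq (by simp) (by linarith) (by linarith)
    _ _ hgap_mem hsum
  calc volume (tangentPolygon r S)
      ≤ ∑ k ∈ Finset.range (m + 1),
          volume (kite r ((a k + a (k + 1)) / 2) ((a (k + 1) - a k) / 2)) :=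
        (measure_mono (tangentPolygon_subset_biUnion_kite hr hΛπ haS hstep hperiod)).trans
          (measure_biUnion_finset_le _ _)
    _ ≤ ∑ k ∈ Finset.range (m + 1), ENNReal.ofReal (r ^ 2 * tan ((a (k + 1) - a k) / 2)) :=
        Finset.sum_le_sum fun k hk => volume_kite_le (by linarith [(hgap_mem k hk).1])
          (by linarith [(hgap_mem k hk).2])
    _ = ENNReal.ofReal (r ^ 2 * ∑ k ∈ Finset.range (m + 1), tan ((a (k + 1) - a k) / 2)) := by
        rw [← ENNReal.ofReal_sum_of_nonneg htan, Finset.mul_sum]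
    _ ≤ _ := by gcongr

lemma ofReal_mul_volume_preimage_sub_tangentPolygon_le (hS : IsClosed S) (hΛπ : Λ < π)
    (hgap : ∀ θ, (S ∩ Ioc θ (θ + Λ)).Nonempty) (hper : ∀ θ ∈ S, θ + 2 * π ∈ S) (hr : 0 < r)
    {n : ℕ} (hn : n * Λ ≤ 2 * π) (hn' : 2 * π < (n + 1) * Λ) (c : E2) :
    ENNReal.ofReal (π / (n * tan (Λ / 2) + tan ((2 * π - n * Λ) / 2))) *
      volume ((· - c) ⁻¹' tangentPolygon r S) ≤ volume (ball c r) := by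
  have hn1 : (1 : ℝ) ≤ n := by
    by_contra! h
    have : n = 0 := by exact_mod_cast Nat.lt_one_iff.mp (by exact_mod_cast h)
    simp only [this, Nat.cast_zero, zero_add, one_mul] at hn'
    linarith [pi_pos]
  have hΛ : 0 < Λ := by nlinarith [pi_pos]
  have hK : 0 < n * tan (Λ / 2) + tan ((2 * π - n * Λ) / 2) := by
    have := tan_pos_of_pos_of_lt_pi_div_two (x := Λ / 2) (by linarith) (by linarith)
    have := tan_nonneg_of_nonneg_of_le_pi_div_two (x := (2 * π - n * Λ) / 2) (by linarith)
      (by nlinarith)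
    nlinarith
  rw [show (· - c) = (· + -c) by simp only [sub_eq_add_neg], measure_preimage_add_right]
  have hvol := volume_tangentPolygon_le hS hΛπ hgap hper hr hn hn'
  set K := n * tan (Λ / 2) + tan ((2 * π - n * Λ) / 2)
  calc _ ≤ ENNReal.ofReal (π / K) * ENNReal.ofReal (r ^ 2 * K) := by gcongr
    _ = volume (ball c r) := by
        rw [EuclideanSpace.volume_ball_fin_two, ← ENNReal.ofReal_mul (by positivity),
          ← ENNReal.ofReal_pow hr.le, ← ENNReal.ofReal_mul (by positivity)]
        congr 1
        field_simp

end TangentPolygon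

def contactAngles {ι : Type*} (c : ι → E2) (r : ι → ℝ) (i : ι) : Set ℝ :=
  {θ | ∃ j, j ≠ i ∧ c i + r i • unitVec θ ∈ closedBall (c j) (r j)}

section ContactAngles

variable {ι : Type*} {c : ι → E2} {r : ι → ℝ} {r₀ R₀ : ℝ}

lemma add_two_pi_mem_contactAngles {i : ι} {θ : ℝ} (hθ : θ ∈ contactAngles c r i) :
    θ + 2 * π ∈ contactAngles c r i := by
  simpa [contactAngles, unitVec] using hθ

lemma isClosed_contactAngles (hr₀ : 0 < r₀) (hr : ∀ i, r i ∈ Icc r₀ R₀)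
    (hpack : Pairwise fun i j => Disjoint (ball (c i) (r i)) (ball (c j) (r j))) (i : ι) :
    IsClosed (contactAngles c r i) := by
  have hcont : Continuous fun θ => c i + r i • unitVec θ :=
    continuous_const.add (continuous_unitVec.const_smul (r i))
  have hnear : contactAngles c r i =
      ⋃ j ∈ {j | c j ∈ closedBall (c i) (r i + R₀)},
        {θ | j ≠ i ∧ c i + r i • unitVec θ ∈ closedBall (c j) (r j)} := by
    ext θ
    simp only [contactAngles, mem_iUnion, mem_ofPred_eq, exists_prop]
    refine ⟨fun ⟨j, hji, hj⟩ => ⟨j, ?_, hji, hj⟩, fun ⟨j, _, hj⟩ => ⟨j, hj⟩⟩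
    rw [mem_closedBall] at hj ⊢
    have : dist (c i + r i • unitVec θ) (c i) = r i := by
      rw [dist_eq_norm, add_sub_cancel_left, norm_smul, norm_unitVec, mul_one, Real.norm_eq_abs,
        abs_of_pos (hr₀.trans_le (hr i).1)]
    linarith [dist_triangle (c j) (c i + r i • unitVec θ) (c i),
      dist_comm (c j) (c i + r i • unitVec θ), (hr j).2]
  rw [hnear]
  exact (finite_setOf_mem_closedBall hr₀ (fun j => (hr j).1) hpack _ _).isClosed_biUnion
    fun j _ => isClosed_const.inter (isClosed_closedBall.preimage hcont)

lemma exists_sub_mem_tangentPolygon_contactAngles [Nonempty ι] (hr₀ : 0 < r₀)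
    (hr : ∀ i, r i ∈ Icc r₀ R₀)
    (hpack : Pairwise fun i j => Disjoint (ball (c i) (r i)) (ball (c j) (r j))) (x : E2) :
    ∃ i, x - c i ∈ tangentPolygon (r i) (contactAngles c r i) := by
  obtain ⟨i, hi⟩ := exists_forall_power_le hr₀ hr hpack x
  exact ⟨i, fun θ ⟨j, hji, hj⟩ =>
    inner_le_of_forall_power_le hr₀ hr hpack hi hji (norm_unitVec θ) hj⟩

end ContactAngles

section Density

lemma measure_ball_le_mul_measure_inter {X ι : Type*} [PseudoMetricSpace X] [MeasurableSpace X]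
    [OpensMeasurableSpace X] (μ : Measure X) {c : ι → X} {r : ι → ℝ} {P : ι → Set X}
    {C : ℝ≥0∞} {M R₀ : ℝ} (hcover : ∀ x, ∃ i, x ∈ P i) (hP : ∀ i, P i ⊆ closedBall (c i) M)
    (hPμ : ∀ i, C * μ (P i) ≤ μ (ball (c i) (r i))) (hr : ∀ i, r i ≤ R₀)
    (hpack : Pairwise fun i j => Disjoint (ball (c i) (r i)) (ball (c j) (r j)))
    (hfin : ∀ x B, {i | c i ∈ closedBall x B}.Finite) (x : X) (R : ℝ) :
    C * μ (ball x R) ≤ μ ((⋃ i, closedBall (c i) (r i)) ∩ ball x (R + (M + R₀))) := by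
  set I := (hfin x (R + M)).toFinset
  have hcoverI : ball x R ⊆ ⋃ i ∈ I, P i := by
    intro y hy
    obtain ⟨i, hi⟩ := hcover y
    have hci : dist (c i) x ≤ R + M := by
      linarith [dist_triangle (c i) y x, mem_closedBall'.mp (hP i hi), (mem_ball.mp hy).le]
    exact mem_biUnion ((hfin x (R + M)).mem_toFinset.mpr hci) hi
  have hballs : (⋃ i ∈ I, ball (c i) (r i)) ⊆
      (⋃ i, closedBall (c i) (r i)) ∩ ball x (R + (M + R₀)) := by
    simp only [iUnion_subset_iff]
    intro i hi y hy
    have hci : dist (c i) x ≤ R + M := (hfin x (R + M)).mem_toFinset.mp hi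
    refine ⟨mem_iUnion.mpr ⟨i, ball_subset_closedBall hy⟩, mem_ball.mpr ?_⟩
    linarith [dist_triangle y (c i) x, mem_ball.mp hy, hr i]
  calc C * μ (ball x R) ≤ C * ∑ i ∈ I, μ (P i) :=
        mul_le_mul_right ((measure_mono hcoverI).trans (measure_biUnion_finset_le _ _)) C
    _ ≤ ∑ i ∈ I, μ (ball (c i) (r i)) := by
        rw [Finset.mul_sum]; exact Finset.sum_le_sum fun i _ => hPμ i
    _ = μ (⋃ i ∈ I, ball (c i) (r i)) :=
        (measure_biUnion_finset (fun i _ j _ hij => hpack hij) fun i _ => measurableSet_ball).symm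
    _ ≤ _ := measure_mono hballs

lemma le_liminf_measure_inter_ball_div {A : Set E2} {C : ℝ≥0∞} (hC : C ≠ ⊤) {M : ℝ}
    (h : ∀ R, 0 ≤ R → C * volume (ball (0 : E2) R) ≤ volume (A ∩ ball 0 (R + M))) :
    C ≤ liminf (fun R => volume (A ∩ ball 0 R) / volume (ball (0 : E2) R)) atTop := by
  have hlim : Tendsto (fun R : ℝ => C * ENNReal.ofReal ((1 - M / R) ^ 2)) atTop (𝓝 C) := by
    have h1 : Tendsto (fun R : ℝ => (1 - M / R) ^ 2) atTop (𝓝 1) := by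
      simpa using ((tendsto_const_nhds (x := (1 : ℝ))).sub
        ((tendsto_const_nhds (x := M)).div_atTop tendsto_id)).pow 2
    simpa using ENNReal.Tendsto.const_mul (ENNReal.tendsto_ofReal h1) (Or.inr hC)
  refine hlim.liminf_eq.symm.trans_le (liminf_le_liminf ?_)
  filter_upwards [eventually_gt_atTop M, eventually_gt_atTop 0] with R hRM hR
  have hball : volume (ball (0 : E2) R) ≠ 0 := by simp [hR, pi_pos]
  rw [ENNReal.le_div_iff_mul_le (Or.inl hball) (Or.inl measure_ball_lt_top.ne)]
  convert h (R - M) (by linarith) using 1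
  · simp only [EuclideanSpace.volume_ball_fin_two]
    rw [← ENNReal.ofReal_pow hR.le, ← ENNReal.ofReal_pow (by linarith), mul_assoc,
      ← mul_assoc (ENNReal.ofReal _), ← ENNReal.ofReal_mul (sq_nonneg _)]
    congr 3
    field_simp
  · rw [sub_add_cancel]

end Density

/-- L. Fejes Tóth's stability theorem: in a stable packing of the plane by circles with
radii bounded between positive constants, if `Λ` is the instability (every boundary arc
of central angle exceeding `Λ` contains a contact point) then the lower density `d`
satisfies `d ≥ π / (n tan(Λ/2) + tan((2π − nΛ)/2))`, where `n = ⌊2π/Λ⌋`. -/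
theorem stable_packing_density (c : ℕ → EuclideanSpace ℝ (Fin 2)) (r : ℕ → ℝ)
    (r₀ R₀ : ℝ) (hr₀ : 0 < r₀) (hr : ∀ i, r i ∈ Set.Icc r₀ R₀)
    (hpack : Pairwise fun i j => Disjoint (Metric.ball (c i) (r i)) (Metric.ball (c j) (r j)))
    (Λ : ℝ) (hΛ0 : 0 < Λ) (hΛπ : Λ < π)
    (pt : ℕ → ℝ → EuclideanSpace ℝ (Fin 2))
    (hpt : ∀ i θ j, pt i θ j = c i j + r i * (if j = 0 then Real.cos θ else Real.sin θ))
    -- instability at most `Λ`: every arc of angular width greater than `Λ` on the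
    -- boundary of a disk contains a point of contact with another disk
    (hstab : ∀ i, ∀ α : ℝ, ∀ ε > 0, ∃ θ ∈ Set.Icc α (α + Λ + ε),
      ∃ j, j ≠ i ∧ pt i θ ∈ Metric.closedBall (c j) (r j))
    (n : ℕ) (hn : n = ⌊2 * π / Λ⌋₊) (d : ℝ≥0∞)
    (hd : d = Filter.liminf
      (fun R : ℝ => volume ((⋃ i, Metric.closedBall (c i) (r i)) ∩ Metric.ball 0 R) /
        volume (Metric.ball (0 : EuclideanSpace ℝ (Fin 2)) R)) Filter.atTop) :
    ENNReal.ofReal (π / (n * Real.tan (Λ / 2) + Real.tan ((2 * π - n * Λ) / 2))) ≤ d := by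
  have hpt' : ∀ i θ, pt i θ = c i + r i • unitVec θ := fun i θ => by
    ext j; fin_cases j <;> simp [hpt]
  have hn₁ : n * Λ ≤ 2 * π := by
    rw [hn, ← le_div_iff₀ hΛ0]; exact Nat.floor_le (by positivity)
  have hn₂ : 2 * π < (n + 1) * Λ := by
    rw [hn, ← div_lt_iff₀ hΛ0]; exact Nat.lt_floor_add_one _
  have hclosed := isClosed_contactAngles hr₀ hr hpack
  have hgap : ∀ i θ, (contactAngles c r i ∩ Ioc θ (θ + Λ)).Nonempty := fun i =>
    nonempty_inter_Ioc_of_forall_exists_mem_Icc (hclosed i) hΛ0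
      (by simpa [hpt', contactAngles] using hstab i)
  have hcell : ∀ i, (· - c i) ⁻¹' tangentPolygon (r i) (contactAngles c r i) ⊆
      closedBall (c i) (R₀ / cos (Λ / 2)) := fun i =>
    (preimage_sub_tangentPolygon_subset_closedBall hΛ0 hΛπ (hgap i) (c i)).trans
      (closedBall_subset_closedBall (div_le_div_of_nonneg_right (hr i).2
        (cos_nonneg_of_mem_Icc ⟨by linarith, by linarith⟩)))
  rw [hd]
  exact le_liminf_measure_inter_ball_div ENNReal.ofReal_ne_top fun R _ =>
    measure_ball_le_mul_measure_inter volume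
      (exists_sub_mem_tangentPolygon_contactAngles hr₀ hr hpack) hcell
      (fun i => ofReal_mul_volume_preimage_sub_tangentPolygon_le (hclosed i) hΛπ (hgap i)
        (fun _ => add_two_pi_mem_contactAngles) (hr₀.trans_le (hr i).1) hn₁ hn₂ (c i))
      (fun i => (hr i).2) hpack (finite_setOf_mem_closedBall hr₀ (fun i => (hr i).1) hpack) 0 R
end

section
/- In any finite packing of convex disks in the plane, for every direction u there exists a member of the packing that can be translated in direction u arbitrarily far without intersecting the interiors of the other members at any time during the motion. -/
open scoped Pointwise


namespace DeBruijnAux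

/-- Build a periodic cyclic chain from a finite chain that wraps around. -/
lemma wrap_cycle {ι : Type*} (R : ι → ι → Prop) (g : ℕ → ι) (d : ℕ) (hd : 1 ≤ d)
    (hchain : ∀ j, j + 1 < d → R (g j) (g (j + 1))) (hwrap : R (g (d - 1)) (g 0)) :
    ∃ c : ℕ → ι, (∀ k, R (c k) (c (k + 1))) ∧ Function.Periodic c d := by
  refine ⟨fun k => g (k % d), fun k => ?_, fun k => by simp [Nat.add_mod_right]⟩
  show R (g (k % d)) (g ((k + 1) % d))
  have hmm : (k + 1) % d = (k % d + 1) % d := (Nat.mod_add_mod k d 1).symm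
  have hlt : k % d + 1 ≤ d := Nat.succ_le_of_lt (Nat.mod_lt k hd)
  rcases eq_or_lt_of_le hlt with h | h
  · have h1 : (k + 1) % d = 0 := by rw [hmm]; rw [h]; exact Nat.mod_self d
    rw [h1, show k % d = d - 1 by omega]
    exact hwrap
  · have h1 : (k + 1) % d = k % d + 1 := by rw [hmm]; exact Nat.mod_eq_of_lt h
    rw [h1]
    exact hchain _ (by omega)

/-- Abstract combinatorial core: no cycles for the "blocking" relation,
given the planar shadow structure. -/
lemma no_cycle {ι : Type*} (R : ι → ι → Prop) (S : ι → Set ℝ)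
    (hS : ∀ i a b y, a ∈ S i → b ∈ S i → a ≤ y → y ≤ b → y ∈ S i)
    (hirr : ∀ i, ¬ R i i)
    (hx : ∀ i j, R i j → (S i ∩ S j).Nonempty)
    (h2 : ∀ i j, R i j → R j i → False)
    (h3 : ∀ i j k, R i j → R j k → R k i →
        ∀ x, x ∈ S i → x ∈ S j → x ∈ S k → False)
    (hshare : ∀ i j, i ≠ j → ∀ x, x ∈ S i → x ∈ S j → R i j ∨ R j i) :
    ∀ n, 1 ≤ n → ∀ c : ℕ → ι, (∀ k, R (c k) (c (k + 1))) →
      Function.Periodic c n → False := by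
  intro n
  induction n using Nat.strong_induction_on with
  | _ n IH =>
  intro hn c hc hper
  -- small cases
  by_cases e1 : n = 1
  · subst e1
    exact hirr (c 0) (by have := hc 0; rwa [hper 0] at this)
  by_cases e2 : n = 2
  · subst e2
    have h20 : c 2 = c 0 := hper 0
    exact h2 _ _ (hc 0) (by have := hc 1; rwa [h20] at this)
  by_cases e3 : n = 3
  · subst e3
    have h30 : c 3 = c 0 := hper 0
    have hc2 : R (c 2) (c 0) := by have := hc 2; rwa [h30] at this
    obtain ⟨x0, hx0a, hx0b⟩ := hx _ _ (hc 0)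
    obtain ⟨x1, hx1a, hx1b⟩ := hx _ _ (hc 1)
    obtain ⟨x2, hx2a, hx2b⟩ := hx _ _ hc2
    -- x0 ∈ S c0 ∩ S c1, x1 ∈ S c1 ∩ S c2, x2 ∈ S c2 ∩ S c0
    -- the median of x0 x1 x2 is in all three
    have key : ∀ μ : ℝ, μ ∈ S (c 0) → μ ∈ S (c 1) → μ ∈ S (c 2) → False := by
      intro μ m0 m1 m2
      exact h3 _ _ _ (hc 0) (hc 1) hc2 μ m0 m1 m2
    rcases le_total x0 x1 with h01 | h01
    · rcases le_total x1 x2 with h12 | h12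
      · exact key x1 (hS _ x0 x2 x1 hx0a hx2b h01 h12) hx1a hx1b
      · rcases le_total x0 x2 with h02 | h02
        · exact key x2 hx2b (hS _ x0 x1 x2 hx0b hx1a h02 h12) hx2a
        · exact key x0 hx0a hx0b (hS _ x2 x1 x0 hx2a hx1b h02 h01)
    · rcases le_total x0 x2 with h02 | h02
      · exact key x0 hx0a hx0b (hS _ x1 x2 x0 hx1b hx2a h01 h02)
      · rcases le_total x1 x2 with h12 | h12
        · exact key x2 hx2b (hS _ x1 x0 x2 hx1a hx0b h12 h02) hx2a
        · exact key x1 (hS _ x2 x0 x1 hx2b hx0a h12 h01) hx1a hx1b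
  have h4 : 4 ≤ n := by omega
  -- the canonical shadow-intersection point of each edge
  classical
  set x : ℕ → ℝ := fun k =>
    if h : (S (c k) ∩ S (c (k + 1))).Nonempty then h.some else 0 with hxdef
  have hmem : ∀ k, x k ∈ S (c k) ∩ S (c (k + 1)) := by
    intro k
    have h := hx _ _ (hc k)
    simp only [hxdef, dif_pos h]
    exact h.some_mem
  have hxper : Function.Periodic x n := by
    intro k
    have e1 : c (k + n) = c k := hper k
    have e2 : c (k + n + 1) = c (k + 1) := by
      have := hper (k + 1); rwa [show k + 1 + n = k + n + 1 by omega] at this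
    simp only [hxdef, e1, e2]
  -- no shortcuts: distance-2..(n-2) shadows are disjoint
  have Hdisj : ∀ a k, 2 ≤ k → k + 2 ≤ n → ∀ y, y ∈ S (c a) → y ∉ S (c (a + k)) := by
    intro a k hk2 hkn y hy1 hy2
    by_cases heq : c a = c (a + k)
    · -- cycle of period k
      obtain ⟨c', hc', hper'⟩ := wrap_cycle R (fun j => c (a + j)) k (by omega)
        (fun j hj => hc (a + j))
        (by
          have : R (c (a + (k - 1))) (c (a + (k - 1) + 1)) := hc _
          rwa [show a + (k - 1) + 1 = a + k by omega, ← heq] at this)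
      exact IH k (by omega) (by omega) c' hc' hper'
    · rcases hshare _ _ heq y hy1 hy2 with hR | hR
      · -- R (c a) (c (a+k)) : cycle of period n - k + 1
        obtain ⟨c', hc', hper'⟩ := wrap_cycle R
          (fun j => Nat.casesOn j (c a) (fun j' => c (a + k + j'))) (n - k + 1)
          (by omega)
          (by
            intro j hj
            cases j with
            | zero => simpa using hR
            | succ j' =>
              have : R (c (a + k + j')) (c (a + k + j' + 1)) := hc _
              simpa [add_assoc] using this)
          (by
            have he : n - k + 1 - 1 = (n - k - 1) + 1 := by omega
            rw [he]
            show R (c (a + k + (n - k - 1))) (c a)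
            have h1 : R (c (a + k + (n - k - 1))) (c (a + k + (n - k - 1) + 1)) := hc _
            rwa [show a + k + (n - k - 1) + 1 = a + n by omega, hper a] at h1)
        exact IH (n - k + 1) (by omega) (by omega) c' hc' hper'
      · -- R (c (a+k)) (c a) : cycle of period k + 1
        obtain ⟨c', hc', hper'⟩ := wrap_cycle R (fun j => c (a + j)) (k + 1) (by omega)
          (fun j hj => hc (a + j))
          (by simpa using hR)
        exact IH (k + 1) (by omega) (by omega) c' hc' hper'
  -- take a (periodic) local maximum of x
  obtain ⟨k₀, hk₀mem, hk₀⟩ := Finset.exists_max_image (Finset.range n) x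
    ⟨0, Finset.mem_range.mpr (by omega)⟩
  have hmax : ∀ j, x j ≤ x k₀ := by
    intro j
    calc x j = x (j % n) := (hxper.map_mod_nat j).symm
    _ ≤ x k₀ := hk₀ _ (Finset.mem_range.mpr (Nat.mod_lt _ (by omega)))
  set b : ℕ := k₀ + (n - 1) with hb
  have hxb1 : x (b + 1) = x k₀ := by
    rw [show b + 1 = k₀ + n by omega]
    exact hxper k₀
  have hb0 : x b ≤ x (b + 1) := by rw [hxb1]; exact hmax b
  have hb2 : x (b + 2) ≤ x (b + 1) := by rw [hxb1]; exact hmax (b + 2)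
  -- disjointness instances
  have d1 : x (b + 2) ∉ S (c (b + 1)) := by
    intro hmem'
    exact Hdisj (b + 1) 2 le_rfl (by omega) (x (b + 2)) hmem'
      (by rw [show b + 1 + 2 = b + 2 + 1 by omega]; exact (hmem (b + 2)).2)
  have d2 : x b ∉ S (c (b + 2)) := by
    intro hmem'
    exact Hdisj b 2 le_rfl (by omega) (x b) (hmem b).1 hmem'
  -- x (b+2) < x b from d1
  have hlt1 : x (b + 2) < x b := by
    by_contra h
    push_neg at h
    exact d1 (hS _ (x b) (x (b + 1)) (x (b + 2)) (hmem b).2 (hmem (b + 1)).1 h hb2)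
  -- x b ∈ S (c (b+2)) from ord-connectedness: contradiction
  exact d2 (hS _ (x (b + 2)) (x (b + 1)) (x b) (hmem (b + 2)).1 (hmem (b + 1)).2 hlt1.le hb0)


noncomputable section

abbrev E2 := EuclideanSpace ℝ (Fin 2)

/-- The coordinate orthogonal to `u`. -/
def Xc (u : E2) : E2 →ₗ[ℝ] ℝ where
  toFun p := u 0 * p 1 - u 1 * p 0
  map_add' p q := by simp; ring
  map_smul' t p := by simp; ring

/-- The coordinate along `u`. -/
def Yc (u : E2) : E2 →ₗ[ℝ] ℝ where
  toFun p := u 0 * p 0 + u 1 * p 1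
  map_add' p q := by simp; ring
  map_smul' t p := by simp; ring

lemma norm_sq_coords (u : E2) (hu : ‖u‖ = 1) : u 0 ^ 2 + u 1 ^ 2 = 1 := by
  have h1 : (1:ℝ) = Real.sqrt (∑ i, ‖u i‖ ^ 2) := by rw [← hu]; exact EuclideanSpace.norm_eq u
  have h3 : ∑ i : Fin 2, ‖u i‖ ^ 2 = u 0 ^ 2 + u 1 ^ 2 := by
    simp [Fin.sum_univ_two, sq_abs]
  nlinarith [Real.sq_sqrt (by positivity : (0:ℝ) ≤ ∑ i : Fin 2, ‖u i‖ ^ 2), h3]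

lemma Xc_u (u : E2) : Xc u u = 0 := by simp [Xc]; ring

/-- Two points with the same `Xc`-coordinate differ by a multiple of `u`. -/
lemma decomp (u : E2) (hu : ‖u‖ = 1) (p q : E2) (h : Xc u p = Xc u q) :
    q = p + (Yc u q - Yc u p) • u := by
  have hn := norm_sq_coords u hu
  simp only [Xc, Yc, LinearMap.coe_mk, AddHom.coe_mk] at h ⊢
  ext i
  fin_cases i
  · simp only [Fin.mk_zero, Fin.mk_one, PiLp.add_apply, PiLp.smul_apply, smul_eq_mul]
    linear_combination (-(q 0 - p 0)) * hn + u 1 * h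
  · simp only [Fin.mk_zero, Fin.mk_one, PiLp.add_apply, PiLp.smul_apply, smul_eq_mul]
    linear_combination (-(q 1 - p 1)) * hn - u 0 * h

/-- Pair lemma: once `K j` blocks `K i` from above somewhere, every common
vertical line has `K i` strictly below `K j`. -/
lemma pairlemma {m : ℕ} (K : Fin m → Set E2) (hconv : ∀ i, Convex ℝ (K i))
    (hpack : Pairwise fun i j => Disjoint (interior (K i)) (interior (K j)))
    (u : E2) {i j : Fin m} (hij : i ≠ j) {p₀ : E2} (hp₀ : p₀ ∈ interior (K i))
    {t₀ : ℝ} (ht₀ : 0 < t₀) (hz₀ : p₀ + t₀ • u ∈ interior (K j)) :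
    ∀ p ∈ interior (K i), ∀ t : ℝ, p + t • u ∈ interior (K j) → 0 < t := by
  obtain ⟨f, cc, hfa, hfb⟩ := geometric_hahn_banach_open_open ((hconv i).interior)
    isOpen_interior ((hconv j).interior) isOpen_interior (hpack hij)
  have hfu : 0 < f u := by
    have h1 := hfa _ hp₀
    have h2 := hfb _ hz₀
    rw [map_add, map_smul, smul_eq_mul] at h2
    nlinarith
  intro p hp t hpt
  have h1 := hfa _ hp
  have h2 := hfb _ hpt
  rw [map_add, map_smul, smul_eq_mul] at h2
  nlinarith

end

end DeBruijnAux


open DeBruijnAux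

/-- De Bruijn; L. Fejes Tóth and Heppes: in any finite packing of convex disks in the
plane, for every direction there is a member that can be translated arbitrarily far in
that direction without ever overlapping the other members. -/
theorem finite_packing_translation_escape (m : ℕ) (hm : 1 ≤ m)
    (K : Fin m → Set (EuclideanSpace ℝ (Fin 2)))
    (hconv : ∀ i, Convex ℝ (K i)) (hcomp : ∀ i, IsCompact (K i))
    (hpack : Pairwise fun i j => Disjoint (interior (K i)) (interior (K j)))
    (u : EuclideanSpace ℝ (Fin 2)) (hu : ‖u‖ = 1) :
    ∃ i, ∀ t : ℝ, 0 ≤ t → ∀ j, j ≠ i →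
      Disjoint (interior ((t • u) +ᵥ K i)) (interior (K j)) := by
  classical
  by_contra hcon
  push_neg at hcon
  -- the blocking relation
  set R : Fin m → Fin m → Prop := fun i j => i ≠ j ∧
    ∃ p ∈ interior (K i), ∃ t : ℝ, 0 < t ∧ p + t • u ∈ interior (K j) with hRdef
  -- the shadows
  set S : Fin m → Set ℝ := fun i => (Xc u) '' interior (K i) with hSdef
  -- every member is blocked by some other member
  have hstep : ∀ i, ∃ j, R i j := by
    intro i
    obtain ⟨t, ht, j, hji, hnd⟩ := hcon i
    rw [Set.not_disjoint_iff] at hnd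
    obtain ⟨z, hz1, hz2⟩ := hnd
    rw [interior_vadd] at hz1
    obtain ⟨p, hp, rfl⟩ := hz1
    rcases eq_or_lt_of_le ht with h0 | h0
    · exfalso
      simp only [← h0, zero_smul, zero_vadd] at hz2
      exact Set.disjoint_left.mp (hpack hji.symm) hp hz2
    · exact ⟨j, hji.symm, p, hp, t, h0, by simpa [vadd_eq_add, add_comm] using hz2⟩
  -- hypotheses of the abstract no-cycle lemma
  have hS : ∀ i a b y, a ∈ S i → b ∈ S i → a ≤ y → y ≤ b → y ∈ S i := by
    intro i a b y ha hb h1 h2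
    have hcv : Convex ℝ (S i) := ((hconv i).interior).linear_image (Xc u)
    exact hcv.ordConnected.out ha hb ⟨h1, h2⟩
  have hirr : ∀ i, ¬ R i i := fun i h => h.1 rfl
  have hx : ∀ i j, R i j → (S i ∩ S j).Nonempty := by
    rintro i j ⟨hij, p, hp, t, ht, hpt⟩
    refine ⟨Xc u p, ⟨p, hp, rfl⟩, ⟨p + t • u, hpt, ?_⟩⟩
    rw [map_add, map_smul, Xc_u, smul_eq_mul, mul_zero, add_zero]
  have h2 : ∀ i j, R i j → R j i → False := by
    rintro i j ⟨hij, p, hp, t, ht, hpt⟩ ⟨hji, q, hq, s, hs, hqs⟩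
    have PL := pairlemma K hconv hpack u hij hp ht hpt
    have : 0 < -s := by
      refine PL (q + s • u) hqs (-s) ?_
      rwa [add_assoc, ← add_smul, add_neg_cancel, zero_smul, add_zero]
    linarith
  have h3 : ∀ i j k, R i j → R j k → R k i →
      ∀ x, x ∈ S i → x ∈ S j → x ∈ S k → False := by
    rintro i j k hij hjk hki x ⟨p, hp, hxp⟩ ⟨q, hq, hxq⟩ ⟨r, hr, hxr⟩
    obtain ⟨hij', p₀, hp₀, t₀, ht₀, hpt₀⟩ := hij
    obtain ⟨hjk', p₁, hp₁, t₁, ht₁, hpt₁⟩ := hjk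
    obtain ⟨hki', p₂, hp₂, t₂, ht₂, hpt₂⟩ := hki
    have e1 := decomp u hu p q (by rw [hxp, hxq])
    have e2 := decomp u hu q r (by rw [hxq, hxr])
    have e3 := decomp u hu r p (by rw [hxr, hxp])
    have g1 : 0 < Yc u q - Yc u p :=
      pairlemma K hconv hpack u hij' hp₀ ht₀ hpt₀ p hp _ (e1 ▸ hq)
    have g2 : 0 < Yc u r - Yc u q :=
      pairlemma K hconv hpack u hjk' hp₁ ht₁ hpt₁ q hq _ (e2 ▸ hr)
    have g3 : 0 < Yc u p - Yc u r :=
      pairlemma K hconv hpack u hki' hp₂ ht₂ hpt₂ r hr _ (e3 ▸ hp)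
    linarith
  have hshare : ∀ i j, i ≠ j → ∀ x, x ∈ S i → x ∈ S j → R i j ∨ R j i := by
    rintro i j hij x ⟨p, hp, hxp⟩ ⟨q, hq, hxq⟩
    have e1 := decomp u hu p q (by rw [hxp, hxq])
    set s : ℝ := Yc u q - Yc u p with hsdef
    have key : q + (-s) • u = p := by
      rw [e1, add_assoc, ← add_smul, add_neg_cancel, zero_smul, add_zero]
    rcases lt_trichotomy s 0 with hs | hs | hs
    · exact Or.inr ⟨hij.symm, q, hq, -s, by linarith, key ▸ hp⟩
    · exfalso
      rw [hs, zero_smul, add_zero] at e1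
      exact Set.disjoint_left.mp (hpack hij) hp (e1 ▸ hq)
    · exact Or.inl ⟨hij, p, hp, s, hs, e1 ▸ hq⟩
  -- build an infinite walk, extract a cycle, contradict `no_cycle`
  choose F hF using hstep
  set i₀ : Fin m := ⟨0, hm⟩ with hi₀
  have hiter : ∀ k : ℕ, R (F^[k] i₀) (F^[k + 1] i₀) := by
    intro k
    rw [Function.iterate_succ_apply']
    exact hF _
  obtain ⟨a, b, hab, heq⟩ := Fintype.exists_ne_map_eq_of_card_lt
    (fun k : Fin (m + 1) => F^[k.val] i₀) (by simp)
  wlog hlt : a.val < b.val generalizing a b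
  · have hne : a.val ≠ b.val := fun h => hab (Fin.ext h)
    exact this b a hab.symm heq.symm (by omega)
  set d : ℕ := b.val - a.val with hd
  obtain ⟨c, hc, hper⟩ := wrap_cycle R (fun j => F^[a.val + j] i₀) d (by omega)
    (fun j hj => hiter _)
    (by
      show R (F^[a.val + (d - 1)] i₀) (F^[a.val + 0] i₀)
      have e : a.val + (d - 1) = b.val - 1 := by omega
      rw [e]
      have := hiter (b.val - 1)
      rw [show b.val - 1 + 1 = b.val by omega] at this
      rw [show (a.val + 0) = a.val by omega]
      rwa [← heq] at this)
  exact no_cycle R S hS hirr hx h2 h3 hshare d (by omega) c hc hper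
end
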